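/- arXiv:2404.08294 — 5 statements merged into one kernel-verified Lean document; each statement's English description precedes it below -/
import Mathlib

section
/- Let D be a weighted oriented graph containing a balanced cycle C₁ that is connected to the rest of D by a path of length k ≥ 0 (k = 0 meaning that C₁ shares exactly one vertex with the rest of D). If f_a ∈ I_D is a binomial such that E(C₁) ⊆ supp(f_a), then the restriction a|_{E(C₁)} lies in Null(A(C₁)), and there exists a primitive binomial f_{c₁} ∈ I_{C₁} such that f_{c₁}^+ divides f_a^+, f_{c₁}^− divides f_a^−, and f_{c₁} ≺ f_a (i.e., supp(f_{c₁}^+) ⊆ supp(f_a^+) and supp(f_{c₁}^−) ⊆ supp(f_a^−)). -/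
open MvPolynomial

/-- A weighted oriented graph on vertex set `Fin n`, with edges indexed by `Fin m`:
`src e` and `tgt e` are the source and target of the directed edge `e`, and `w` is the
weight function. There are no loops and no multiple edges. -/
structure WOG (n m : ℕ) : Type where
  src : Fin m → Fin n
  tgt : Fin m → Fin n
  w : Fin n → ℕ
  w_pos : ∀ v, 0 < w v
  no_loops : ∀ e, src e ≠ tgt e
  no_mult : ∀ e e' : Fin m, ({src e, tgt e} : Finset (Fin n)) = {src e', tgt e'} → e = e'

namespace WOG

variable {n m : ℕ}

/-- The map `φ` sending the edge variable `e_k` for the edge `e_k = (x_i, x_j)` to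
`x_i * x_j ^ w j`. -/
noncomputable def phi (K : Type*) [CommSemiring K] (D : WOG n m) :
    MvPolynomial (Fin m) K →ₐ[K] MvPolynomial (Fin n) K :=
  MvPolynomial.aeval fun e => X (D.src e) * X (D.tgt e) ^ D.w (D.tgt e)

/-- The toric ideal `I_D` of a weighted oriented graph: the kernel of `φ`. -/
noncomputable def toricIdeal (K : Type*) [CommRing K] (D : WOG n m) :
    Ideal (MvPolynomial (Fin m) K) :=
  RingHom.ker (D.phi K).toRingHom

/-- The underlying unordered edge of the directed edge `e`. -/
def sym2Edge (D : WOG n m) (e : Fin m) : Sym2 (Fin n) := s(D.src e, D.tgt e)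

/-- The underlying (simple) graph of a weighted oriented graph. -/
def graph (D : WOG n m) : SimpleGraph (Fin n) :=
  SimpleGraph.fromEdgeSet (Set.range D.sym2Edge)

/-- The degree of a vertex: the number of edges incident to it (in either direction). -/
noncomputable def deg (D : WOG n m) (v : Fin n) : ℕ :=
  (Finset.univ.filter fun e => D.src e = v ∨ D.tgt e = v).card

/-- The set of vertices incident to an edge of `E`. -/
def vertsOf (D : WOG n m) (E : Finset (Fin m)) : Set (Fin n) :=
  {x | ∃ e ∈ E, D.src e = x ∨ D.tgt e = x}

/-- `E` is the edge (index) set of a cycle of `D`. -/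
def IsCycleEdges (D : WOG n m) (E : Finset (Fin m)) : Prop :=
  ∃ (v : Fin n) (c : D.graph.Walk v v), c.IsCycle ∧
    {x | x ∈ c.edges} = D.sym2Edge '' (E : Set (Fin m))

/-- The number of cycles of `D` (cycles being identified with their edge sets). -/
noncomputable def numCycles (D : WOG n m) : ℕ :=
  {E : Finset (Fin m) | D.IsCycleEdges E}.ncard

/-- The incidence matrix `A(D)` of a weighted oriented graph, over `ℚ`. -/
noncomputable def incMatrix (D : WOG n m) : Matrix (Fin n) (Fin m) ℚ :=
  Matrix.of fun i j => if D.src j = i then 1 else if D.tgt j = i then (D.w i : ℚ) else 0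

/-- A cycle of `D` with edge set `E` is balanced iff the determinant of its incidence matrix
vanishes, equivalently iff the corresponding columns of the incidence matrix of `D` are
linearly dependent over `ℚ`. -/
def BalancedOn (D : WOG n m) (E : Finset (Fin m)) : Prop :=
  ¬ LinearIndependent ℚ fun e : ↥E => D.incMatrix.transpose e.1

end WOG

/-- The nonnegative part of an integer vector. -/
def vplus {m : ℕ} (b : Fin m → ℤ) : Fin m → ℕ := fun i => (b i).toNat

/-- The nonpositive part of an integer vector. -/
def vminus {m : ℕ} (b : Fin m → ℤ) : Fin m → ℕ := fun i => (-(b i)).toNat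

/-- The binomial `e^u - e^v`. -/
noncomputable def binomF (K : Type*) [CommRing K] {m : ℕ} (u v : Fin m → ℕ) :
    MvPolynomial (Fin m) K :=
  MvPolynomial.monomial (Finsupp.equivFunOnFinite.symm u) 1 -
    MvPolynomial.monomial (Finsupp.equivFunOnFinite.symm v) 1

/-- The binomial `f_b = e^{b₊} - e^{b₋}` attached to an integer vector `b`. -/
noncomputable def fvec (K : Type*) [CommRing K] {m : ℕ} (b : Fin m → ℤ) :
    MvPolynomial (Fin m) K :=
  binomF K (vplus b) (vminus b)

/-- The binomial `e^u - e^v ∈ I` is primitive if there is no other nonzero binomial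
`e^{u'} - e^{v'} ∈ I` with `e^{u'} ∣ e^u` and `e^{v'} ∣ e^v`. -/
def IsPrimitiveF (K : Type*) [CommRing K] {m : ℕ}
    (I : Ideal (MvPolynomial (Fin m) K)) (u v : Fin m → ℕ) : Prop :=
  u ≠ v ∧ binomF K u v ∈ I ∧
    ∀ u' v' : Fin m → ℕ, u' ≠ v' → binomF K u' v' ∈ I →
      u' ≤ u → v' ≤ v → u' = u ∧ v' = v

/-- The Graver basis of `I`: the set of all primitive binomials of `I`. -/
noncomputable def graverF (K : Type*) [CommRing K] {m : ℕ}
    (I : Ideal (MvPolynomial (Fin m) K)) : Set (MvPolynomial (Fin m) K) :=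
  {f | ∃ u v : Fin m → ℕ, IsPrimitiveF K I u v ∧ f = binomF K u v}

/-- `G` is a minimal generating set of the ideal `I`. -/
def IsMinimalGenSet {R : Type*} [CommRing R] (G : Set R) (I : Ideal R) : Prop :=
  Ideal.span G = I ∧ ∀ g ∈ G, Ideal.span (G \ {g}) ≠ I

/-- A toric ideal is strongly robust if its Graver basis is a minimal generating set. -/
def StronglyRobustF (K : Type*) [CommRing K] {m : ℕ}
    (I : Ideal (MvPolynomial (Fin m) K)) : Prop :=
  IsMinimalGenSet (graverF K I) I

namespace Aux
variable {n m : ℕ} (D : WOG n m)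

/-- integer incidence coefficient -/
def cF (D : WOG n m) (i : Fin n) (e : Fin m) : ℕ :=
  (if D.src e = i then 1 else 0) + (if D.tgt e = i then D.w (D.tgt e) else 0)

lemma incMatrix_eq_cF (i : Fin n) (e : Fin m) :
    D.incMatrix i e = (cF D i e : ℚ) := by
  have hne := D.no_loops e
  simp only [WOG.incMatrix, Matrix.of_apply, cF]
  split_ifs with h1 h2 <;> push_cast <;> simp_all

lemma cF_eq_zero (i : Fin n) (e : Fin m) (h : ¬ (D.src e = i ∨ D.tgt e = i)) :
    cF D i e = 0 := by
  push_neg at h; simp [cF, h.1, h.2]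

lemma cF_ne_zero (i : Fin n) (e : Fin m) (h : D.src e = i ∨ D.tgt e = i) :
    cF D i e ≠ 0 := by
  rcases h with h | h
  · simp [cF, h]
  · have h2 : 0 < (if D.tgt e = i then D.w (D.tgt e) else 0) := by rw [if_pos h]; exact D.w_pos _
    simp only [cF]; omega

lemma prod_monomial_one (K : Type*) [CommSemiring K] {ι : Type*} (s : Finset ι)
    (t : ι → (Fin n →₀ ℕ)) :
    (∏ e ∈ s, (monomial (t e) (1 : K))) = monomial (∑ e ∈ s, t e) 1 := by
  induction s using Finset.cons_induction with
  | empty => simp [MvPolynomial.monomial_zero']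
  | cons a s ha ih => rw [Finset.prod_cons, ih, Finset.sum_cons, MvPolynomial.monomial_mul, one_mul]

lemma phi_monomial (K : Type*) [CommSemiring K] (s : Fin m → ℕ) :
    D.phi K (monomial (Finsupp.equivFunOnFinite.symm s) 1) =
      monomial (Finsupp.equivFunOnFinite.symm (fun i => ∑ e, cF D i e * s e)) 1 := by
  have h1 : (monomial (Finsupp.equivFunOnFinite.symm s) (1:K)) =
      ∏ e, (X e ^ (Finsupp.equivFunOnFinite.symm s) e : MvPolynomial (Fin m) K) := by
    rw [← MvPolynomial.prod_X_pow_eq_monomial]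
    refine (Finset.prod_subset (Finset.subset_univ _) ?_)
    intro x _ hx
    simp only [Finsupp.mem_support_iff, ne_eq, not_not] at hx
    rw [hx, pow_zero]
  have hse : ∀ e, (Finsupp.equivFunOnFinite.symm s) e = s e := fun e => rfl
  simp only [hse] at h1
  have h1b := map_prod (D.phi K) (fun e => (X e ^ s e : MvPolynomial (Fin m) K)) Finset.univ
  rw [h1, h1b]
  have h2 : ∀ e : Fin m, (D.phi K) (X e ^ s e) =
      monomial (s e • (Finsupp.single (D.src e) 1 + Finsupp.single (D.tgt e) (D.w (D.tgt e)))) 1 := by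
    intro e
    rw [map_pow]
    have : (D.phi K) (X e) = X (D.src e) * X (D.tgt e) ^ D.w (D.tgt e) := by
      simp [WOG.phi]
    rw [this]
    rw [MvPolynomial.X_pow_eq_monomial]
    have hX : (X (D.src e) : MvPolynomial (Fin n) K) = monomial (Finsupp.single (D.src e) 1) 1 := by
      rw [← MvPolynomial.X_pow_eq_monomial, pow_one]
    rw [hX, MvPolynomial.monomial_mul, one_mul, MvPolynomial.monomial_pow, one_pow]
  rw [Finset.prod_congr rfl (fun e _ => h2 e), prod_monomial_one]
  have hfeq : (∑ e, s e • (Finsupp.single (D.src e) 1 + Finsupp.single (D.tgt e) (D.w (D.tgt e)))) =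
      Finsupp.equivFunOnFinite.symm (fun i => ∑ e, cF D i e * s e) := by
    refine Finsupp.ext fun i => ?_
    rw [Finsupp.finset_sum_apply]
    simp only [Finsupp.equivFunOnFinite_symm_apply_apply, Finsupp.smul_apply,
      Finsupp.add_apply, Finsupp.single_apply, smul_eq_mul, cF]
    refine Finset.sum_congr rfl (fun e _ => ?_)
    split_ifs <;> ring
  rw [hfeq]


lemma binom_mem_iff (K : Type*) [Field K] (u v : Fin m → ℕ) :
    binomF K u v ∈ D.toricIdeal K ↔ ∀ i, ∑ e, cF D i e * u e = ∑ e, cF D i e * v e := by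
  have hmem : binomF K u v ∈ D.toricIdeal K ↔ D.phi K (binomF K u v) = 0 := Iff.rfl
  rw [hmem]
  unfold binomF
  rw [map_sub, phi_monomial, phi_monomial]
  constructor
  · intro h
    have heq : (Finsupp.equivFunOnFinite.symm (fun i => ∑ e, cF D i e * u e)) =
        (Finsupp.equivFunOnFinite.symm (fun i => ∑ e, cF D i e * v e)) := by
      by_contra hne
      have := congrArg (MvPolynomial.coeff (Finsupp.equivFunOnFinite.symm (fun i => ∑ e, cF D i e * u e))) h
      rw [MvPolynomial.coeff_sub, MvPolynomial.coeff_monomial, MvPolynomial.coeff_monomial] at this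
      rw [if_pos rfl, if_neg (fun hh => hne hh.symm)] at this
      simp at this
    have := Finsupp.equivFunOnFinite.symm.injective heq
    exact fun i => congrFun this i
  · intro h
    have : (fun i => ∑ e, cF D i e * u e) = (fun i => ∑ e, cF D i e * v e) := funext h
    rw [this, sub_self]

lemma mulVec_eq (z : Fin m → ℚ) (i : Fin n) :
    D.incMatrix.mulVec z i = ∑ e, (cF D i e : ℚ) * z e := by
  simp only [Matrix.mulVec, dotProduct]
  exact Finset.sum_congr rfl fun e _ => by rw [incMatrix_eq_cF]

lemma fvec_mem_iff (K : Type*) [Field K] (b : Fin m → ℤ) :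
    (binomF K (fun e => (b e).toNat) (fun e => (-(b e)).toNat) ∈ D.toricIdeal K) ↔
      ∀ i, D.incMatrix.mulVec (fun e => (b e : ℚ)) i = 0 := by
  rw [binom_mem_iff]
  have key : ∀ i, D.incMatrix.mulVec (fun e => (b e : ℚ)) i =
      (((∑ e, cF D i e * (b e).toNat : ℕ) : ℚ) - ((∑ e, cF D i e * (-(b e)).toNat : ℕ) : ℚ)) := by
    intro i
    rw [mulVec_eq]
    push_cast
    rw [← Finset.sum_sub_distrib]
    refine Finset.sum_congr rfl fun e _ => ?_
    have hb : ((b e).toNat : ℚ) - ((-(b e)).toNat : ℚ) = (b e : ℚ) := by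
      have := Int.toNat_sub_toNat_neg (b e)
      exact_mod_cast congrArg (fun z : ℤ => (z : ℚ)) this
    rw [← hb]; ring
  constructor
  · intro h i; rw [key i, h i, sub_self]
  · intro h i
    have := h i
    rw [key i] at this
    have : ((∑ e, cF D i e * (b e).toNat : ℕ) : ℚ) = ((∑ e, cF D i e * (-(b e)).toNat : ℕ) : ℚ) := by
      linarith
    exact_mod_cast this


open SimpleGraph

lemma sym2Edge_injective : Function.Injective D.sym2Edge := by
  intro e e' h
  apply D.no_mult
  simp only [WOG.sym2Edge, Sym2.eq, Sym2.rel_iff', Prod.mk.injEq, Prod.swap_prod_mk] at h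
  rcases h with ⟨h1, h2⟩ | ⟨h1, h2⟩
  · rw [h1, h2]
  · rw [h1, h2, Finset.pair_comm]

lemma mem_sym2Edge (x : Fin n) (e : Fin m) :
    x ∈ D.sym2Edge e ↔ (D.src e = x ∨ D.tgt e = x) := by
  simp only [WOG.sym2Edge, Sym2.mem_iff]
  constructor
  · rintro (h | h) <;> [left; right] <;> exact h.symm
  · rintro (h | h) <;> [left; right] <;> exact h.symm

lemma adj_exists {x y : Fin n} (h : D.graph.Adj x y) : ∃ e, D.sym2Edge e = s(x, y) := by
  rw [WOG.graph, SimpleGraph.fromEdgeSet_adj] at h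
  exact h.1

/-- every vertex in the support of a walk is the endpoint, or lies in some edge -/
lemma walk_support_edge {u v : Fin n} (p : D.graph.Walk u v) (x : Fin n)
    (hx : x ∈ p.support) : x = v ∨ ∃ s ∈ p.edges, x ∈ s := by
  induction p with
  | nil => left; simpa using hx
  | @cons a b c h q ih =>
    rw [SimpleGraph.Walk.support_cons] at hx
    rcases List.mem_cons.mp hx with rfl | hx
    · right; exact ⟨s(x, b), by simp [SimpleGraph.Walk.edges_cons], by simp⟩
    · rcases ih hx with h1 | ⟨s, hs, hxs⟩
      · left; exact h1
      · right; exact ⟨s, by simp [SimpleGraph.Walk.edges_cons, hs], hxs⟩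

/-- an internal vertex of a trail lies in two distinct edges -/
lemma two_edges_at_internal {u v : Fin n} (p : D.graph.Walk u v) :
    p.edges.Nodup → ∀ x : Fin n, x ∈ p.support → x ≠ u → x ≠ v →
    ∃ s₁ ∈ p.edges, ∃ s₂ ∈ p.edges, s₁ ≠ s₂ ∧ x ∈ s₁ ∧ x ∈ s₂ := by
  induction p with
  | nil => intro _ x hx hxu hxv; simp at hx; exact absurd hx hxu
  | @cons a b c h q ih =>
    intro hnd x hx hxu hxv
    rw [SimpleGraph.Walk.support_cons] at hx
    rw [SimpleGraph.Walk.edges_cons] at hnd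
    rcases List.mem_cons.mp hx with rfl | hx
    · exact absurd rfl hxu
    · by_cases hxb : x = b
      · subst hxb
        -- q is nonnil since x ≠ c = v
        cases q with
        | nil => exact absurd rfl hxv
        | @cons b' d c' h' r =>
          refine ⟨s(a, x), by simp [SimpleGraph.Walk.edges_cons], s(x, d),
            by simp [SimpleGraph.Walk.edges_cons], ?_, by simp, by simp⟩
          intro hss
          have : s(a, x) ∈ (SimpleGraph.Walk.cons h' r).edges := by
            rw [hss]; simp [SimpleGraph.Walk.edges_cons]
          exact (List.nodup_cons.mp hnd).1 this
      · rcases ih (List.Nodup.of_cons hnd) x hx hxb hxv with ⟨s₁, hs₁, s₂, hs₂, hne, hx₁, hx₂⟩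
        exact ⟨s₁, by simp [SimpleGraph.Walk.edges_cons, hs₁], s₂,
          by simp [SimpleGraph.Walk.edges_cons, hs₂], hne, hx₁, hx₂⟩

/-- the incident-edge finset -/
def T (D : WOG n m) (x : Fin n) : Finset (Fin m) :=
  Finset.univ.filter fun e => D.src e = x ∨ D.tgt e = x

lemma pair_of_card_two {x : Fin n} (hcard : (T D x).card = 2) {e₁ e₂ : Fin m}
    (h₁ : e₁ ∈ T D x) (h₂ : e₂ ∈ T D x) (hne : e₁ ≠ e₂) : T D x = {e₁, e₂} := by
  refine (Finset.eq_of_subset_of_card_le ?_ ?_).symm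
  · intro e he
    rcases Finset.mem_insert.mp he with rfl | he
    · exact h₁
    · rw [Finset.mem_singleton.mp he]; exact h₂
  · rw [hcard, Finset.card_insert_of_notMem (by simpa using hne), Finset.card_singleton]

lemma row_pair (z : Fin m → ℚ) {x : Fin n} (hrow : D.incMatrix.mulVec z x = 0)
    (hcard : D.deg x = 2) {e₁ e₂ : Fin m} (h₁ : e₁ ∈ T D x) (h₂ : e₂ ∈ T D x)
    (hne : e₁ ≠ e₂) (hz₁ : z e₁ = 0) : z e₂ = 0 := by
  have hT : T D x = {e₁, e₂} := pair_of_card_two D hcard h₁ h₂ hne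
  have hsum : D.incMatrix.mulVec z x = ∑ e ∈ T D x, (cF D x e : ℚ) * z e := by
    rw [mulVec_eq]
    refine (Finset.sum_subset (Finset.subset_univ _) ?_).symm
    intro e _ he
    rw [cF_eq_zero D x e (by simpa [T, Finset.mem_filter] using he)]
    simp
  rw [hsum, hT, Finset.sum_pair hne, hz₁, mul_zero, zero_add] at hrow
  have hc2 : (cF D x e₂ : ℚ) ≠ 0 := by
    have := cF_ne_zero D x e₂ (by simpa [T, Finset.mem_filter] using h₂)
    exact_mod_cast this
  exact (mul_eq_zero.mp hrow).resolve_left hc2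



lemma dropLast_subset_cons {α : Type*} (a : α) (l : List α) :
    ∀ x ∈ l.dropLast, x ∈ (a :: l).dropLast := by
  cases l with
  | nil => simp
  | cons y ys =>
    intro x hx
    rw [List.dropLast_cons₂]
    exact List.mem_cons_of_mem _ hx

lemma mem_T_of_sym2 {x : Fin n} {e : Fin m} (hx : x ∈ D.sym2Edge e) : e ∈ T D x := by
  rw [mem_sym2Edge] at hx
  simp [T, Finset.mem_filter, hx]

/-- Propagation of vanishing along a walk avoiding `v₁` internally. -/
lemma propagate (v₁ : Fin n) (z : Fin m → ℚ)
    (hrow : ∀ x, x ≠ v₁ → D.incMatrix.mulVec z x = 0) :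
    ∀ {u v : Fin n} (p : D.graph.Walk u v),
    p.edges.Nodup → (∀ x ∈ p.support, x ≠ v₁ → D.deg x = 2) →
    (∀ x ∈ p.support.tail.dropLast, x ≠ v₁) →
    ∀ e₀ e : Fin m, D.sym2Edge e₀ ∈ p.edges → D.sym2Edge e ∈ p.edges → z e₀ = 0 → z e = 0 := by
  intro u v p
  induction p with
  | nil => intro _ _ _ e₀ e he₀ _ _; simp [SimpleGraph.Walk.edges_nil] at he₀
  | @cons a b c h q ih =>
    intro hnd hdeg hint e₀ e he₀ he hz0
    rw [SimpleGraph.Walk.edges_cons] at hnd he₀ he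
    obtain ⟨e₁, he₁⟩ := adj_exists D h
    have hfst : ∀ f : Fin m, D.sym2Edge f = s(a, b) → f = e₁ :=
      fun f hf => sym2Edge_injective D (hf.trans he₁.symm)
    have hndq : q.edges.Nodup := List.Nodup.of_cons hnd
    have hdegq : ∀ x ∈ q.support, x ≠ v₁ → D.deg x = 2 := by
      intro x hx
      exact hdeg x (by rw [SimpleGraph.Walk.support_cons]; exact List.mem_cons_of_mem _ hx)
    have hintq : ∀ x ∈ q.support.tail.dropLast, x ≠ v₁ := by
      intro x hx
      refine hint x ?_
      rw [SimpleGraph.Walk.support_cons, List.tail_cons]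
      have h2 := dropLast_subset_cons b q.support.tail x hx
      rwa [← SimpleGraph.Walk.support_eq_cons q] at h2
    -- facts available when q = cons h' r
    rcases List.mem_cons.mp he₀ with h0f | h0q
    · have he₀1 : e₀ = e₁ := hfst e₀ h0f
      rcases List.mem_cons.mp he with hef | heq
      · rw [hfst e hef, ← he₀1]; exact hz0
      · cases q with
        | nil => simp [SimpleGraph.Walk.edges_nil] at heq
        | @cons b' d c' h' r =>
          obtain ⟨e₂, he₂⟩ := adj_exists D h'
          have hsndmem : D.sym2Edge e₂ ∈ (SimpleGraph.Walk.cons h' r).edges := by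
            rw [he₂, SimpleGraph.Walk.edges_cons]; exact List.mem_cons_self
          have hne12 : e₁ ≠ e₂ := by
            intro hcontr
            apply (List.nodup_cons.mp hnd).1
            rw [← he₁, hcontr, he₂, SimpleGraph.Walk.edges_cons]
            exact List.mem_cons_self
          have hbv : b ≠ v₁ := by
            refine hint b ?_
            rw [SimpleGraph.Walk.support_cons, List.tail_cons, SimpleGraph.Walk.support_cons,
              List.dropLast_cons_of_ne_nil (SimpleGraph.Walk.support_ne_nil r)]
            exact List.mem_cons_self
          have hdegb : D.deg b = 2 := by
            refine hdeg b ?_ hbv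
            rw [SimpleGraph.Walk.support_cons]
            exact List.mem_cons_of_mem _ (SimpleGraph.Walk.start_mem_support _)
          have hT1 : e₁ ∈ T D b := mem_T_of_sym2 D (by rw [he₁]; simp)
          have hT2 : e₂ ∈ T D b := mem_T_of_sym2 D (by rw [he₂]; simp)
          have hz2 : z e₂ = 0 :=
            row_pair D z (hrow b hbv) hdegb hT1 hT2 hne12 (he₀1 ▸ hz0)
          exact ih hndq hdegq hintq e₂ e hsndmem heq hz2
    · rcases List.mem_cons.mp he with hef | heq
      · have he1 : e = e₁ := hfst e hef
        cases q with
        | nil => simp [SimpleGraph.Walk.edges_nil] at h0q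
        | @cons b' d c' h' r =>
          obtain ⟨e₂, he₂⟩ := adj_exists D h'
          have hsndmem : D.sym2Edge e₂ ∈ (SimpleGraph.Walk.cons h' r).edges := by
            rw [he₂, SimpleGraph.Walk.edges_cons]; exact List.mem_cons_self
          have hne12 : e₁ ≠ e₂ := by
            intro hcontr
            apply (List.nodup_cons.mp hnd).1
            rw [← he₁, hcontr, he₂, SimpleGraph.Walk.edges_cons]
            exact List.mem_cons_self
          have hbv : b ≠ v₁ := by
            refine hint b ?_
            rw [SimpleGraph.Walk.support_cons, List.tail_cons, SimpleGraph.Walk.support_cons,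
              List.dropLast_cons_of_ne_nil (SimpleGraph.Walk.support_ne_nil r)]
            exact List.mem_cons_self
          have hdegb : D.deg b = 2 := by
            refine hdeg b ?_ hbv
            rw [SimpleGraph.Walk.support_cons]
            exact List.mem_cons_of_mem _ (SimpleGraph.Walk.start_mem_support _)
          have hT1 : e₁ ∈ T D b := mem_T_of_sym2 D (by rw [he₁]; simp)
          have hT2 : e₂ ∈ T D b := mem_T_of_sym2 D (by rw [he₂]; simp)
          have hz2 : z e₂ = 0 := ih hndq hdegq hintq e₀ e₂ h0q hsndmem hz0
          rw [he1]
          exact row_pair D z (hrow b hbv) hdegb hT2 hT1 (Ne.symm hne12) hz2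
      · exact ih hndq hdegq hintq e₀ e h0q heq hz0


lemma getLast_not_mem_dropLast {α : Type*} (l : List α) (h : l ≠ []) (hnd : l.Nodup) :
    l.getLast h ∉ l.dropLast := by
  intro hmem
  have heq := List.dropLast_append_getLast h
  rw [← heq] at hnd
  rcases List.nodup_append'.mp hnd with ⟨_, _, hdisj⟩
  exact hdisj hmem (by simp)

lemma mem_support_of_sym2 {u v : Fin n} (p : D.graph.Walk u v) {x : Fin n} {e : Fin m}
    (hx : x ∈ D.sym2Edge e) (he : D.sym2Edge e ∈ p.edges) : x ∈ p.support := by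
  rw [mem_sym2Edge] at hx
  have he' : s(D.src e, D.tgt e) ∈ p.edges := he
  rcases hx with hx | hx
  · subst hx; exact SimpleGraph.Walk.fst_mem_support_of_mem_edges p he'
  · subst hx; exact SimpleGraph.Walk.snd_mem_support_of_mem_edges p he'

section Cycle

variable {v₁ : Fin n} {EC : Finset (Fin m)} {c : D.graph.Walk v₁ v₁}

/-- edge indices of `EC` give edges of `c` and vice versa -/
lemma edge_mem_cycle (hce : {s | s ∈ c.edges} = D.sym2Edge '' (EC : Set (Fin m)))
    {e : Fin m} (he : e ∈ EC) : D.sym2Edge e ∈ c.edges := by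
  have : D.sym2Edge e ∈ {s | s ∈ c.edges} := by
    rw [hce]; exact ⟨e, he, rfl⟩
  exact this

lemma cycle_edge_index (hce : {s | s ∈ c.edges} = D.sym2Edge '' (EC : Set (Fin m)))
    {s : Sym2 (Fin n)} (hs : s ∈ c.edges) : ∃ e ∈ EC, D.sym2Edge e = s := by
  have : s ∈ D.sym2Edge '' (EC : Set (Fin m)) := by rw [← hce]; exact hs
  obtain ⟨e, he, hee⟩ := this
  exact ⟨e, he, hee⟩

lemma support_deg2 (hc : c.IsCycle)
    (hce : {s | s ∈ c.edges} = D.sym2Edge '' (EC : Set (Fin m)))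
    (hattach : ∀ z ∈ D.vertsOf EC, z ≠ v₁ → D.deg z = 2) :
    ∀ x ∈ c.support, x ≠ v₁ → D.deg x = 2 := by
  intro x hx hxv
  rcases walk_support_edge D c x hx with rfl | ⟨s, hs, hxs⟩
  · exact absurd rfl hxv
  · obtain ⟨e, he, rfl⟩ := cycle_edge_index D hce hs
    rw [mem_sym2Edge] at hxs
    exact hattach x ⟨e, he, hxs⟩ hxv

lemma internal_ne (hc : c.IsCycle) :
    ∀ x ∈ c.support.tail.dropLast, x ≠ v₁ := by
  intro x hx
  have htne : c.support.tail ≠ [] := by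
    intro hcontr
    have h1 := SimpleGraph.Walk.length_support c
    have h3 := hc.three_le_length
    rw [SimpleGraph.Walk.support_eq_cons c, hcontr] at h1
    simp only [List.length_cons, List.length_nil] at h1
    omega
  have hlast : c.support.tail.getLast htne = v₁ := by
    rw [List.getLast_tail]
    exact SimpleGraph.Walk.getLast_support c
  intro hxv
  subst hxv
  have := getLast_not_mem_dropLast c.support.tail htne hc.support_nodup
  rw [hlast] at this
  exact this hx

/-- the kill lemma: a vector supported on `EC`, with vanishing rows away from `v₁`,
vanishing at one coordinate of `EC`, is zero -/
lemma kill (hc : c.IsCycle)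
    (hce : {s | s ∈ c.edges} = D.sym2Edge '' (EC : Set (Fin m)))
    (hattach : ∀ z ∈ D.vertsOf EC, z ≠ v₁ → D.deg z = 2)
    (z : Fin m → ℚ) (hzsup : ∀ e ∉ EC, z e = 0)
    (hrow : ∀ x, x ≠ v₁ → D.incMatrix.mulVec z x = 0)
    (e₀ : Fin m) (he₀ : e₀ ∈ EC) (hz0 : z e₀ = 0) : z = 0 := by
  funext e
  by_cases he : e ∈ EC
  · exact propagate D v₁ z hrow c hc.edges_nodup (support_deg2 D hc hce hattach)
      (internal_ne D hc) e₀ e (edge_mem_cycle D hce he₀) (edge_mem_cycle D hce he) hz0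
  · exact hzsup e he

/-- at any non-`v₁` vertex of the cycle, the incident edges are exactly two edges of `EC` -/
lemma T_subset_EC (hc : c.IsCycle)
    (hce : {s | s ∈ c.edges} = D.sym2Edge '' (EC : Set (Fin m)))
    (hattach : ∀ z ∈ D.vertsOf EC, z ≠ v₁ → D.deg z = 2)
    {x : Fin n} (hx : x ∈ D.vertsOf EC) (hxv : x ≠ v₁) : ↑(T D x) ⊆ (EC : Set (Fin m)) := by
  obtain ⟨e', he', hinc⟩ := hx
  have hxe' : x ∈ D.sym2Edge e' := (mem_sym2Edge D x e').mpr hinc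
  have hxsup : x ∈ c.support :=
    mem_support_of_sym2 D c hxe' (edge_mem_cycle D hce he')
  obtain ⟨s₁, hs₁, s₂, hs₂, hss, hx₁, hx₂⟩ :=
    two_edges_at_internal D c hc.edges_nodup x hxsup hxv hxv
  obtain ⟨f₁, hf₁, rfl⟩ := cycle_edge_index D hce hs₁
  obtain ⟨f₂, hf₂, rfl⟩ := cycle_edge_index D hce hs₂
  have hfne : f₁ ≠ f₂ := fun hcontr => hss (by rw [hcontr])
  have hdeg : (T D x).card = 2 := hattach x ⟨e', he', hinc⟩ hxv
  have hpair := pair_of_card_two D hdeg (mem_T_of_sym2 D hx₁) (mem_T_of_sym2 D hx₂) hfne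
  rw [hpair]
  intro f hf
  rcases Finset.mem_insert.mp hf with rfl | hf
  · exact hf₁
  · rw [Finset.mem_singleton.mp hf]; exact hf₂

end Cycle
end Aux


/-- Let `D` be a weighted oriented graph containing a balanced cycle `C₁`
(with edge set `EC`) connected to the rest of `D` by a path of length `k ≥ 0` at the vertex
`v₁` (so that every vertex of `C₁` other than `v₁` has degree `2` in `D`). If `f_a ∈ I_D`
is a binomial with `E(C₁) ⊆ supp(f_a)`, then `a|_{E(C₁)} ∈ Null(A(C₁))`, and there is a
primitive binomial `f_{c₁}` of `I_{C₁}` (a nonzero binomial of `I_D` supported on `E(C₁)`,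
primitive among such) with `f_{c₁}⁺ ∣ f_a⁺`, `f_{c₁}⁻ ∣ f_a⁻` and `f_{c₁} ≺ f_a`. -/
theorem balanced_cycle_binomial_divides
    {n m : ℕ} (D : WOG n m) (K : Type*) [Field K]
    (EC : Finset (Fin m)) (v₁ : Fin n) (c : D.graph.Walk v₁ v₁)
    (hc : c.IsCycle)
    (hce : {s | s ∈ c.edges} = D.sym2Edge '' (EC : Set (Fin m)))
    (hbal : D.BalancedOn EC)
    (hattach : ∀ z ∈ D.vertsOf EC, z ≠ v₁ → D.deg z = 2)
    (a : Fin m → ℤ) (ha : fvec K a ∈ D.toricIdeal K)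
    (hsupp : ∀ e ∈ EC, a e ≠ 0) :
    -- `a|_{E(C₁)}` lies in the null space of the incidence matrix of `C₁`
    (D.incMatrix.mulVec (fun e => if e ∈ EC then (a e : ℚ) else 0) = 0) ∧
    -- and there is a primitive binomial `f_{c₁} ∈ I_{C₁}` with `f_{c₁} ≺ f_a`
    ∃ c₁ : Fin m → ℤ, c₁ ≠ 0 ∧ (∀ e : Fin m, e ∉ EC → c₁ e = 0) ∧
      fvec K c₁ ∈ D.toricIdeal K ∧
      (∀ u' v' : Fin m → ℕ, u' ≠ v' → binomF K u' v' ∈ D.toricIdeal K →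
        (∀ e : Fin m, e ∉ EC → u' e = 0 ∧ v' e = 0) →
        u' ≤ vplus c₁ → v' ≤ vminus c₁ → u' = vplus c₁ ∧ v' = vminus c₁) ∧
      vplus c₁ ≤ vplus a ∧ vminus c₁ ≤ vminus a ∧
      (∀ e : Fin m, 0 < c₁ e → 0 < a e) ∧ (∀ e : Fin m, c₁ e < 0 → a e < 0) := by
  classical
  -- notation
  set A := D.incMatrix with hA
  -- full kernel membership of a
  have hAa : ∀ i, A.mulVec (fun e => (a e : ℚ)) i = 0 := by
    refine (Aux.fvec_mem_iff D K a).mp ?_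
    exact ha
  -- the restricted vectors
  have hαq_def : True := trivial
  set αz : Fin m → ℤ := fun e => if e ∈ EC then a e else 0 with hαz
  have hαq_cast : ∀ e, ((αz e : ℚ)) = (if e ∈ EC then (a e : ℚ) else 0) := by
    intro e; simp only [hαz]; split_ifs <;> simp
  -- rows away from v₁ vanish for the restriction
  have hrowα : ∀ x, x ≠ v₁ → A.mulVec (fun e => (αz e : ℚ)) x = 0 := by
    intro x hxv
    by_cases hxV : x ∈ D.vertsOf EC
    · have hTE := Aux.T_subset_EC D hc hce hattach hxV hxv
      have heq : A.mulVec (fun e => (αz e : ℚ)) x = A.mulVec (fun e => (a e : ℚ)) x := by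
        rw [Aux.mulVec_eq, Aux.mulVec_eq]
        refine Finset.sum_congr rfl fun e _ => ?_
        by_cases he : e ∈ EC
        · simp only [hαz, if_pos he]
        · have hz : Aux.cF D x e = 0 := by
            apply Aux.cF_eq_zero
            intro hinc
            exact he (hTE (by simp [Aux.T, Finset.mem_filter, hinc]))
          rw [hz]; simp
      rw [heq]; exact hAa x
    · rw [Aux.mulVec_eq]
      refine Finset.sum_eq_zero fun e _ => ?_
      by_cases he : e ∈ EC
      · have hz : Aux.cF D x e = 0 :=
          Aux.cF_eq_zero _ _ _ (fun hinc => hxV ⟨e, he, hinc⟩)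
        rw [hz]; simp
      · simp [hαz, if_neg he]
  -- extract a nonzero null vector supported on EC from balancedness
  obtain ⟨g, hgsum, i₀, hgi₀⟩ := Fintype.not_linearIndependent_iff.mp hbal
  set y : Fin m → ℚ := fun e => if h : e ∈ EC then g ⟨e, h⟩ else 0 with hy
  have hysup : ∀ e ∉ EC, y e = 0 := by intro e he; simp [hy, dif_neg he]
  have hyrow : ∀ x, A.mulVec y x = 0 := by
    intro x
    rw [Aux.mulVec_eq]
    have h1 : ∑ e, (Aux.cF D x e : ℚ) * y e = ∑ e ∈ EC, (Aux.cF D x e : ℚ) * y e := by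
      refine (Finset.sum_subset (Finset.subset_univ _) ?_).symm
      intro e _ he
      rw [hysup e he, mul_zero]
    have h2 : ∑ e ∈ EC, (Aux.cF D x e : ℚ) * y e
        = ∑ i ∈ EC.attach, (Aux.cF D x i.1 : ℚ) * y i.1 :=
      (Finset.sum_attach EC _).symm
    have h3 : ∀ i : {z // z ∈ EC}, y i.1 = g i := by
      intro i; simp [hy, dif_pos i.2]
    have h4 := congrFun hgsum x
    rw [Finset.sum_apply] at h4
    simp only [Pi.zero_apply] at h4
    rw [h1, h2]
    rw [← h4]
    rw [Finset.sum_congr rfl (fun i _ => ?_)]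
    · rfl
    · rw [h3 i]
      simp only [Pi.smul_apply, Matrix.transpose_apply, smul_eq_mul]
      rw [Aux.incMatrix_eq_cF, mul_comm]
  have hyi₀ : y (i₀ : Fin m) ≠ 0 := by
    have : y (i₀ : Fin m) = g i₀ := by simp [hy, dif_pos i₀.2]
    rw [this]; exact hgi₀
  have hi₀EC : (i₀ : Fin m) ∈ EC := i₀.2
  -- Part 1
  have hpart1 : A.mulVec (fun e => (αz e : ℚ)) = 0 := by
    set lam : ℚ := (αz (i₀ : Fin m) : ℚ) / y (i₀ : Fin m) with hlam
    have hδ : ((fun e => (αz e : ℚ)) - lam • y) = 0 := by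
      apply Aux.kill D hc hce hattach _ ?_ ?_ (i₀ : Fin m) hi₀EC ?_
      · intro e he
        simp only [Pi.sub_apply, Pi.smul_apply, smul_eq_mul]
        rw [hysup e he, hαq_cast e, if_neg he, mul_zero, sub_zero]
      · intro x hxv
        rw [Matrix.mulVec_sub, Matrix.mulVec_smul]
        simp only [Pi.sub_apply, Pi.smul_apply, smul_eq_mul]
        rw [hrowα x hxv, hyrow x, mul_zero, sub_zero]
      · simp only [Pi.sub_apply, Pi.smul_apply, smul_eq_mul, hlam]
        rw [div_mul_cancel₀ _ hyi₀, sub_self]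
    have hαlam : (fun e => (αz e : ℚ)) = lam • y := by
      funext e
      have := congrFun hδ e
      simpa [sub_eq_zero] using this
    rw [hαlam, Matrix.mulVec_smul]
    have hy0 : A.mulVec y = 0 := funext hyrow
    rw [hy0, smul_zero]
  have hgoal1 : A.mulVec (fun e => if e ∈ EC then (a e : ℚ) else 0) = 0 := by
    have : (fun e => if e ∈ EC then (a e : ℚ) else 0) = fun e => (αz e : ℚ) :=
      funext fun e => (hαq_cast e).symm
    rw [this]; exact hpart1
  refine ⟨hgoal1, ?_⟩
  -- EC is nonempty
  have hECne : ∃ e₀, e₀ ∈ EC := by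
    have h3 := hc.three_le_length
    have hlen : c.edges.length = c.length := SimpleGraph.Walk.length_edges c
    have hne : c.edges ≠ [] := by
      intro hcontr; rw [hcontr] at hlen; simp at hlen; omega
    obtain ⟨s, hs⟩ := List.exists_mem_of_ne_nil _ hne
    obtain ⟨e₀, he₀, _⟩ := Aux.cycle_edge_index D hce hs
    exact ⟨e₀, he₀⟩
  obtain ⟨e₀, he₀⟩ := hECne
  have hαe₀ : αz e₀ = a e₀ := if_pos he₀
  have hae₀ : a e₀ ≠ 0 := hsupp e₀ he₀
  -- gcd
  set g0 : ℤ := Finset.univ.gcd αz with hg0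
  have hg0dvd : ∀ e, g0 ∣ αz e := fun e => Finset.gcd_dvd (Finset.mem_univ e)
  have hg0ne : g0 ≠ 0 := by
    intro h
    have := Finset.gcd_eq_zero_iff.mp h e₀ (Finset.mem_univ e₀)
    rw [hαe₀] at this
    exact hae₀ this
  have hg0nn : 0 ≤ g0 := by
    have hnorm : normalize g0 = g0 := Finset.normalize_gcd
    rw [← Int.abs_eq_normalize] at hnorm
    exact abs_eq_self.mp hnorm
  have hg0pos : 0 < g0 := lt_of_le_of_ne hg0nn (Ne.symm hg0ne)
  set c₁ : Fin m → ℤ := fun e => αz e / g0 with hc₁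
  have hαc : ∀ e, αz e = g0 * c₁ e := fun e => (Int.mul_ediv_cancel' (hg0dvd e)).symm
  have hgcd_c₁ : Finset.univ.gcd c₁ = 1 := by
    have h2 : Finset.univ.gcd αz = normalize g0 * Finset.univ.gcd c₁ := by
      have : αz = fun e => g0 * c₁ e := funext hαc
      rw [this]
      exact Finset.gcd_mul_left
    rw [Int.normalize_of_nonneg hg0nn, ← hg0] at h2
    exact mul_left_cancel₀ hg0ne (h2.symm.trans (mul_one g0).symm)
  have hc₁supp : ∀ e, e ∉ EC → c₁ e = 0 := by
    intro e he
    simp only [hc₁, hαz, if_neg he, Int.zero_ediv]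
  have hc₁e₀ : c₁ e₀ ≠ 0 := by
    intro h
    rw [hαc e₀, h, mul_zero] at hαe₀
    exact hae₀ hαe₀.symm
  -- kernel membership of c₁
  have hrowc₁ : ∀ x, A.mulVec (fun e => (c₁ e : ℚ)) x = 0 := by
    intro x
    have h1 : (fun e => (αz e : ℚ)) = (g0 : ℚ) • (fun e => (c₁ e : ℚ)) := by
      funext e
      simp only [Pi.smul_apply, smul_eq_mul]
      rw [hαc e]; push_cast; ring
    have h2 := congrFun hpart1 x
    rw [h1, Matrix.mulVec_smul] at h2
    simp only [Pi.smul_apply, smul_eq_mul] at h2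
    have hg0q : (g0 : ℚ) ≠ 0 := Int.cast_ne_zero.mpr hg0ne
    exact (mul_eq_zero.mp h2).resolve_left hg0q
  have hc₁mem : fvec K c₁ ∈ D.toricIdeal K := by
    have := (Aux.fvec_mem_iff D K c₁).mpr hrowc₁
    exact this
  refine ⟨c₁, ?_, hc₁supp, hc₁mem, ?_, ?_, ?_, ?_, ?_⟩
  · intro h
    exact hc₁e₀ (congrFun h e₀)
  · -- primitivity
    intro u' v' hne' hmem' hsupp' hleu hlev
    have hNsum := (Aux.binom_mem_iff D K u' v').mp hmem'
    have hbrow : ∀ x, A.mulVec (fun e => ((u' e : ℚ) - v' e)) x = 0 := by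
      intro x
      rw [Aux.mulVec_eq]
      have hsplit : ∑ e, (Aux.cF D x e : ℚ) * ((u' e : ℚ) - v' e)
          = ((∑ e, Aux.cF D x e * u' e : ℕ) : ℚ) - ((∑ e, Aux.cF D x e * v' e : ℕ) : ℚ) := by
        push_cast
        rw [← Finset.sum_sub_distrib]
        exact Finset.sum_congr rfl fun e _ => by ring
      rw [hsplit, hNsum x, sub_self]
    obtain ⟨μ, hμ⟩ : ∃ μ : ℚ, μ = ((u' e₀ : ℚ) - v' e₀) / (c₁ e₀ : ℚ) := ⟨_, rfl⟩
    have hc₁e₀q : ((c₁ e₀ : ℚ)) ≠ 0 := Int.cast_ne_zero.mpr hc₁e₀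
    have hδ : ((fun e => ((u' e : ℚ) - v' e)) - μ • (fun e => (c₁ e : ℚ))) = 0 := by
      apply Aux.kill D hc hce hattach _ ?_ ?_ e₀ he₀ ?_
      · intro e he
        obtain ⟨hu0, hv0⟩ := hsupp' e he
        simp only [Pi.sub_apply, Pi.smul_apply, smul_eq_mul]
        rw [hu0, hv0, hc₁supp e he]
        simp
      · intro x hxv
        rw [Matrix.mulVec_sub, Matrix.mulVec_smul]
        simp only [Pi.sub_apply, Pi.smul_apply, smul_eq_mul]
        rw [hbrow x, hrowc₁ x, mul_zero, sub_zero]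
      · simp only [Pi.sub_apply, Pi.smul_apply, smul_eq_mul]
        rw [hμ, div_mul_cancel₀ _ hc₁e₀q, sub_self]
    have hbμ : ∀ e, ((u' e : ℚ) - v' e) = μ * (c₁ e : ℚ) := by
      intro e
      have := congrFun hδ e
      simpa [sub_eq_zero] using this
    -- μ is an integer
    have hdvd : ∀ e, (μ.den : ℤ) ∣ c₁ e := by
      intro e
      have h1 : (μ.num : ℚ) * (c₁ e : ℚ) = ((u' e : ℚ) - v' e) * (μ.den : ℚ) := by
        rw [hbμ e, mul_comm μ ((c₁ e : ℚ)), mul_assoc, Rat.mul_den_eq_num, mul_comm]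
      have h2 : μ.num * c₁ e = ((u' e : ℤ) - v' e) * μ.den := by
        exact_mod_cast h1
      have h3 : (μ.den : ℤ) ∣ μ.num * c₁ e := ⟨(u' e : ℤ) - v' e, by rw [h2]; ring⟩
      have hcop : IsCoprime (μ.den : ℤ) μ.num := by
        rw [Int.isCoprime_iff_gcd_eq_one]
        have := μ.reduced
        simpa [Int.gcd, Nat.coprime_comm.mp] using Nat.Coprime.gcd_eq_one (Nat.coprime_comm.mp this)
      exact hcop.dvd_of_dvd_mul_left h3
    have hden1 : μ.den = 1 := by
      have hd : (μ.den : ℤ) ∣ Finset.univ.gcd c₁ := Finset.dvd_gcd fun e _ => hdvd e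
      rw [hgcd_c₁] at hd
      have : μ.den ∣ 1 := by exact_mod_cast hd
      exact Nat.dvd_one.mp this
    have hμt : μ = (μ.num : ℚ) := by
      conv_lhs => rw [← Rat.num_div_den μ]
      rw [hden1]; simp
    set t : ℤ := μ.num with ht
    have hbt : ∀ e, (u' e : ℤ) - v' e = t * c₁ e := by
      intro e
      have := hbμ e
      rw [hμt] at this
      exact_mod_cast this
    -- t = 1
    obtain ⟨e', he'⟩ := Function.ne_iff.mp hne'
    have hbne : (u' e' : ℤ) - v' e' ≠ 0 := by
      intro h
      apply he'
      omega
    have hc₁e' : c₁ e' ≠ 0 := by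
      intro h
      rw [hbt e', h, mul_zero] at hbne
      exact hbne rfl
    have hu'le : (u' e' : ℤ) ≤ (vplus c₁ e' : ℤ) := by exact_mod_cast hleu e'
    have hv'le : (v' e' : ℤ) ≤ (vminus c₁ e' : ℤ) := by exact_mod_cast hlev e'
    have hvp : (vplus c₁ e' : ℤ) = max (c₁ e') 0 := by
      simp [vplus, Int.toNat_eq_max]
    have hvm : (vminus c₁ e' : ℤ) = max (-(c₁ e')) 0 := by
      simp [vminus, Int.toNat_eq_max]
    have ht1 : t = 1 := by
      rcases lt_trichotomy (c₁ e') 0 with hC | hC | hC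
      · -- c₁ e' < 0 : u' e' = 0
        have hu0 : (u' e' : ℤ) = 0 := by
          rw [hvp] at hu'le; omega
        have hveq : -(v' e' : ℤ) = t * c₁ e' := by
          have hb := hbt e'; omega
        have hvne : (v' e' : ℤ) ≠ 0 := by omega
        have htpos : 0 < t := by
          by_contra hcon
          push_neg at hcon
          have h6 := mul_nonneg (neg_nonneg.mpr hcon) (neg_nonneg.mpr hC.le)
          rw [neg_mul_neg] at h6
          omega
        have hvle : (v' e' : ℤ) ≤ -(c₁ e') := by rw [hvm] at hv'le; omega
        have hle1 : t * (-(c₁ e')) ≤ 1 * (-(c₁ e')) := by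
          rw [mul_neg, mul_neg]; omega
        have := le_of_mul_le_mul_right hle1 (by omega : (0:ℤ) < -(c₁ e'))
        omega
      · exact absurd hC hc₁e'
      · -- c₁ e' > 0 : v' e' = 0
        have hv0 : (v' e' : ℤ) = 0 := by
          rw [hvm] at hv'le; omega
        have hueq : (u' e' : ℤ) = t * c₁ e' := by
          have hb := hbt e'; omega
        have hune : (u' e' : ℤ) ≠ 0 := by omega
        have htpos : 0 < t := by
          by_contra hcon
          push_neg at hcon
          have h6 := mul_nonneg (neg_nonneg.mpr hcon) hC.le
          rw [neg_mul] at h6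
          omega
        have hule : (u' e' : ℤ) ≤ c₁ e' := by rw [hvp] at hu'le; omega
        have hle1 : t * c₁ e' ≤ 1 * c₁ e' := by
          rw [one_mul]; omega
        have := le_of_mul_le_mul_right hle1 hC
        omega
    have hbc : ∀ e, (u' e : ℤ) - v' e = c₁ e := by
      intro e; rw [hbt e, ht1, one_mul]
    constructor
    · funext e
      have h1 := hbc e
      have h2 := hleu e
      have h3 := hlev e
      simp only [vplus, vminus] at h2 h3 ⊢
      omega
    · funext e
      have h1 := hbc e
      have h2 := hleu e
      have h3 := hlev e
      simp only [vplus, vminus] at h2 h3 ⊢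
      omega
  · -- vplus c₁ ≤ vplus a
    intro e
    simp only [vplus]
    by_cases he : e ∈ EC
    · have hae : a e = g0 * c₁ e := by rw [← hαc e, hαz]; simp [if_pos he]
      rcases le_or_gt (c₁ e) 0 with hC | hC
      · rw [Int.toNat_of_nonpos hC]; exact Nat.zero_le _
      · have hle : c₁ e ≤ a e := by
          rw [hae]
          nlinarith [mul_nonneg (by omega : (0:ℤ) ≤ g0 - 1) (by omega : (0:ℤ) ≤ c₁ e)]
        exact Int.toNat_le_toNat hle
    · rw [hc₁supp e he]; simp
  · -- vminus c₁ ≤ vminus a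
    intro e
    simp only [vminus]
    by_cases he : e ∈ EC
    · have hae : a e = g0 * c₁ e := by rw [← hαc e, hαz]; simp [if_pos he]
      rcases le_or_gt 0 (c₁ e) with hC | hC
      · rw [Int.toNat_of_nonpos (by omega)]; exact Nat.zero_le _
      · apply Int.toNat_le_toNat
        rw [hae]
        nlinarith [mul_nonneg (by omega : (0:ℤ) ≤ g0 - 1) (by omega : (0:ℤ) ≤ -(c₁ e))]
    · rw [hc₁supp e he]; simp
  · intro e hpos
    have he : e ∈ EC := by
      by_contra hcon
      rw [hc₁supp e hcon] at hpos
      exact lt_irrefl 0 hpos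
    have hae : a e = g0 * c₁ e := by rw [← hαc e, hαz]; simp [if_pos he]
    rw [hae]; exact mul_pos hg0pos hpos
  · intro e hneg
    have he : e ∈ EC := by
      by_contra hcon
      rw [hc₁supp e hcon] at hneg
      exact lt_irrefl 0 hneg
    have hae : a e = g0 * c₁ e := by rw [← hαc e, hαz]; simp [if_pos he]
    rw [hae]; exact mul_neg_of_pos_of_neg hg0pos hneg
end

section
/- Let M ⊆ K[x_1,…,x_n] be a monomial ideal with minimal monomial generating set G(M)={x^{a_1},…,x^{a_m}}, and assume |supp(x^{a_j})| = 2 for each j = 1,…,m. Let f_n ∈ I_M be a binomial with e_i ∈ supp(f_n). Then for every variable x_j ∈ supp(φ(e_i)) there exists an index k ∈ {1,…,m}, k ≠ i, such that e_k ∈ supp(f_n) and x_j ∈ supp(φ(e_k)). -/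
open MvPolynomial

/-- The map `φ : K[e_1,…,e_m] → K[x_1,…,x_n]`, `e_i ↦ x^{a_i}`, attached to a family of
monomials `x^{a_1},…,x^{a_m}` (the generators of a monomial ideal `M`). -/
noncomputable def phiM (K : Type*) [CommSemiring K] {n m : ℕ} (a : Fin m → (Fin n →₀ ℕ)) :
    MvPolynomial (Fin m) K →ₐ[K] MvPolynomial (Fin n) K :=
  MvPolynomial.aeval fun i => MvPolynomial.monomial (a i) 1

/-- The toric ideal `I_M` of the monomial ideal `M` generated by `x^{a_1},…,x^{a_m}`:
the kernel of `φ`. -/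
noncomputable def toricIdealM (K : Type*) [CommRing K] {n m : ℕ}
    (a : Fin m → (Fin n →₀ ℕ)) : Ideal (MvPolynomial (Fin m) K) :=
  RingHom.ker (phiM K a).toRingHom

lemma phi_mono (K : Type*) [Field K] {n m : ℕ} (a : Fin m → (Fin n →₀ ℕ)) (u : Fin m → ℕ) :
    phiM K a (monomial (Finsupp.equivFunOnFinite.symm u) (1:K)) =
      monomial (∑ k, u k • a k) 1 := by
  rw [phiM, aeval_monomial, map_one, one_mul]
  rw [Finsupp.prod_fintype _ _ (fun k => pow_zero _)]
  simp only [Finsupp.coe_equivFunOnFinite_symm, monomial_pow, one_pow]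
  rw [← monomial_sum_one]

/-- Let `M ⊆ K[x_1,…,x_n]` be a monomial ideal with minimal monomial
generating set `{x^{a_1},…,x^{a_m}}`, each generator having support of cardinality `2`.
If `f_b ∈ I_M` is a binomial with `e_i ∈ supp(f_b)`, then for every variable `x_j` in the
support of `φ(e_i) = x^{a_i}` there is an index `k ≠ i` with `e_k ∈ supp(f_b)` and
`x_j ∈ supp(φ(e_k))`. -/
theorem exists_other_generator_sharing_variable
    {n m : ℕ} (K : Type*) [Field K] (a : Fin m → (Fin n →₀ ℕ))
    (hmin : ∀ i j : Fin m, i ≠ j → ¬ a i ≤ a j)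
    (hsupp2 : ∀ j : Fin m, (a j).support.card = 2)
    (b : Fin m → ℤ) (hb : fvec K b ∈ toricIdealM K a)
    (i : Fin m) (hi : b i ≠ 0) :
    ∀ j ∈ (a i).support, ∃ k : Fin m, k ≠ i ∧ b k ≠ 0 ∧ j ∈ (a k).support := by
  intro j hj
  -- extract the exponent equality
  have hker : phiM K a (fvec K b) = 0 := hb
  rw [fvec, binomF, map_sub, phi_mono, phi_mono, sub_eq_zero,
    monomial_eq_monomial_iff] at hker
  have hE : (∑ k, vplus b k • a k) = ∑ k, vminus b k • a k := by
    rcases hker with h | h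
    · exact h.1
    · exact absurd h.1 one_ne_zero
  have hEj : (∑ k, (vplus b k * a k j : ℤ)) = ∑ k, (vminus b k * a k j : ℤ) := by
    have := congrArg (fun f : Fin n →₀ ℕ => (f j : ℤ)) hE
    simpa [Finsupp.finset_sum_apply, Nat.cast_sum] using this
  have hsum : (∑ k, b k * (a k j : ℤ)) = 0 := by
    have : ∀ k, b k * (a k j : ℤ)
        = (vplus b k * a k j : ℤ) - (vminus b k * a k j : ℤ) := by
      intro k
      rw [← sub_mul, vplus, vminus]
      norm_num [Int.toNat_sub_toNat_neg]
    rw [Finset.sum_congr rfl (fun k _ => this k), Finset.sum_sub_distrib, hEj, sub_self]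
  by_contra hcon
  push_neg at hcon
  have hzero : ∀ k ∈ Finset.univ, k ≠ i → b k * (a k j : ℤ) = 0 := by
    intro k _ hk
    rcases eq_or_ne (b k) 0 with h0 | h0
    · simp [h0]
    · have := hcon k hk h0
      simp [Finsupp.notMem_support_iff.mp this]
  rw [Finset.sum_eq_single i hzero (by simp)] at hsum
  rcases mul_eq_zero.mp hsum with h | h
  · exact hi h
  · exact Finsupp.mem_support_iff.mp hj (by exact_mod_cast h)
end

section
/- Let M ⊆ K[x_1,…,x_n] be a monomial ideal with minimal monomial generating set G(M)={x^{a_1},…,x^{a_m}}, and assume |supp(x^{a_j})| = 2 for each j = 1,…,m. Fix an index i, and suppose there exist a variable x_l ∈ supp(x^{a_i}) and an index j ≠ i such that x_l ∈ supp(x^{a_i}) ∩ supp(x^{a_j}) and x_l ∉ supp(x^{a_k}) for all k ≠ i,j. Let f_m, f_n ∈ I_M be primitive binomials with f_m^+ ∣ f_n^+. If e_i ∈ supp(f_m^−), then e_i ∈ supp(f_n^−) and the exponent of e_i in f_m^− is less than or equal to the exponent of e_i in f_n^−. -/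
open MvPolynomial

/-! A binomial `e^{b₊} - e^{b₋}` lies in `I_M` only if `∑ b_k a_k = 0`. Reading this
balance in the coordinate `x_l`, only `e_i` and `e_j` contribute, so
`b_i a_{il} + b_j a_{jl} = 0` with `a_{il}, a_{jl} > 0`: the sign and size of `b_i` are
controlled by `b_j`, hence by the positive part of `b`. -/

lemma phiM_monomial (K : Type*) [CommSemiring K] {n m : ℕ} (a : Fin m → (Fin n →₀ ℕ))
    (u : Fin m → ℕ) :
    phiM K a (monomial (Finsupp.equivFunOnFinite.symm u) 1) = monomial (∑ k, u k • a k) 1 := by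
  rw [phiM, aeval_monomial, map_one, one_mul,
    Finsupp.prod_fintype _ _ (fun k => pow_zero _), monomial_sum_one]
  simp [monomial_pow]

lemma sum_smul_eq_of_binomF_mem_toricIdealM (K : Type*) [CommRing K] [Nontrivial K]
    {n m : ℕ} (a : Fin m → (Fin n →₀ ℕ)) {u v : Fin m → ℕ}
    (h : binomF K u v ∈ toricIdealM K a) :
    ∑ k, u k • a k = ∑ k, v k • a k := by
  have h' : phiM K a (binomF K u v) = 0 := h
  rw [binomF, map_sub, phiM_monomial, phiM_monomial, sub_eq_zero] at h'
  exact (monomial_left_injective one_ne_zero) h'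

lemma vplus_sub_vminus {m : ℕ} (b : Fin m → ℤ) (k : Fin m) :
    (vplus b k : ℤ) - vminus b k = b k := by
  simp only [vplus, vminus]
  omega

lemma sum_mul_apply_eq_zero_of_fvec_mem (K : Type*) [CommRing K] [Nontrivial K]
    {n m : ℕ} (a : Fin m → (Fin n →₀ ℕ)) {b : Fin m → ℤ}
    (h : fvec K b ∈ toricIdealM K a) (l : Fin n) :
    ∑ k, b k * a k l = 0 := by
  have hl := congrArg (fun f : Fin n →₀ ℕ => (f l : ℤ))
    (sum_smul_eq_of_binomF_mem_toricIdealM K a h)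
  simp only [Finsupp.finsetSum_apply, Finsupp.smul_apply, smul_eq_mul, Nat.cast_sum,
    Nat.cast_mul] at hl
  simp only [← vplus_sub_vminus b, sub_mul, Finset.sum_sub_distrib, hl, sub_self]

lemma mul_add_mul_eq_zero_of_fvec_mem (K : Type*) [CommRing K] [Nontrivial K]
    {n m : ℕ} (a : Fin m → (Fin n →₀ ℕ)) {b : Fin m → ℤ}
    (h : fvec K b ∈ toricIdealM K a) {l : Fin n} {i j : Fin m} (hji : j ≠ i)
    (hl : ∀ k, k ≠ i → k ≠ j → l ∉ (a k).support) :
    b i * a i l + b j * a j l = 0 := by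
  rw [← sum_mul_apply_eq_zero_of_fvec_mem K a h l,
    Finset.sum_eq_add_of_mem i j (Finset.mem_univ _) (Finset.mem_univ _) hji.symm]
  intro k _ hk
  simp [Finsupp.notMem_support_iff.mp (hl k hk.1 hk.2)]

lemma le_of_mul_add_mul_eq_zero {x y p q r s : ℤ} (hx : 0 < x) (hy : 0 < y)
    (hpq : p * x + q * y = 0) (hrs : r * x + s * y = 0) (hp : p < 0)
    (hqs : q.toNat ≤ s.toNat) : r ≤ p := by
  have hq : 0 < q := by nlinarith
  have hqs' : q ≤ s := by omega
  nlinarith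

theorem primitive_divides_neg_part_general
    {n m : ℕ} (K : Type*) [Field K] (a : Fin m → (Fin n →₀ ℕ))
    (i : Fin m)
    (hl : ∃ (l : Fin n) (j : Fin m), j ≠ i ∧ l ∈ (a i).support ∧ l ∈ (a j).support ∧
      ∀ k : Fin m, k ≠ i → k ≠ j → l ∉ (a k).support)
    (bm bn : Fin m → ℤ)
    (hbm : IsPrimitiveF K (toricIdealM K a) (vplus bm) (vminus bm))
    (hbn : IsPrimitiveF K (toricIdealM K a) (vplus bn) (vminus bn))
    (hdiv : vplus bm ≤ vplus bn)
    (hi : bm i < 0) :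
    bn i < 0 ∧ vminus bm i ≤ vminus bn i := by
  obtain ⟨l, j, hji, hli, hlj, hlk⟩ := hl
  have hail : (0 : ℤ) < a i l := by simpa [Nat.pos_iff_ne_zero] using hli
  have hajl : (0 : ℤ) < a j l := by simpa [Nat.pos_iff_ne_zero] using hlj
  have hle : bn i ≤ bm i :=
    le_of_mul_add_mul_eq_zero hail hajl
      (mul_add_mul_eq_zero_of_fvec_mem K a hbm.2.1 hji hlk)
      (mul_add_mul_eq_zero_of_fvec_mem K a hbn.2.1 hji hlk) hi (hdiv j)
  refine ⟨hle.trans_lt hi, ?_⟩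
  simp only [vminus]
  omega

/-- Let `M` be a monomial ideal with minimal monomial generating set
`{x^{a_1},…,x^{a_m}}`, each generator having support of cardinality `2`. Fix `i` and suppose
there are a variable `x_l ∈ supp(x^{a_i})` and an index `j ≠ i` with
`x_l ∈ supp(x^{a_i}) ∩ supp(x^{a_j})` and `x_l ∉ supp(x^{a_k})` for all `k ≠ i, j`.
If `f_bm, f_bn ∈ I_M` are primitive binomials with `f_bm⁺ ∣ f_bn⁺` and
`e_i ∈ supp(f_bm⁻)`, then `e_i ∈ supp(f_bn⁻)` and the exponent of `e_i` in `f_bm⁻` is at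
most the exponent of `e_i` in `f_bn⁻`. -/
theorem primitive_divides_neg_part
    {n m : ℕ} (K : Type*) [Field K] (a : Fin m → (Fin n →₀ ℕ))
    (hmin : ∀ i j : Fin m, i ≠ j → ¬ a i ≤ a j)
    (hsupp2 : ∀ j : Fin m, (a j).support.card = 2)
    (i : Fin m)
    (hl : ∃ (l : Fin n) (j : Fin m), j ≠ i ∧ l ∈ (a i).support ∧ l ∈ (a j).support ∧
      ∀ k : Fin m, k ≠ i → k ≠ j → l ∉ (a k).support)
    (bm bn : Fin m → ℤ)
    (hbm : IsPrimitiveF K (toricIdealM K a) (vplus bm) (vminus bm))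
    (hbn : IsPrimitiveF K (toricIdealM K a) (vplus bn) (vminus bn))
    (hdiv : vplus bm ≤ vplus bn)
    (hi : bm i < 0) :
    bn i < 0 ∧ vminus bm i ≤ vminus bn i :=
  primitive_divides_neg_part_general K a i hl bm bn hbm hbn hdiv hi
end

section
/- Let D be a weighted oriented graph and let f_m ∈ I_D be a primitive binomial. Then the subgraph D₁ of D whose edge set is E(D₁) = supp(f_m) (together with the vertices incident to those edges) is connected. -/
open MvPolynomial

section Aux

open MvPolynomial Finsupp

variable {n m : ℕ}

/-- The exponent vector of `φ(e^u)`. -/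
noncomputable def expVec (D : WOG n m) (u : Fin m → ℕ) : Fin n →₀ ℕ :=
  ∑ e : Fin m, u e • (Finsupp.single (D.src e) 1 + Finsupp.single (D.tgt e) (D.w (D.tgt e)))

lemma prod_monomial_one {K : Type*} [CommRing K] {σ : Type*} {ι : Type*} (s : Finset ι)
    (d : ι → σ →₀ ℕ) :
    (∏ i ∈ s, (MvPolynomial.monomial (d i) (1 : K))) =
      MvPolynomial.monomial (∑ i ∈ s, d i) 1 := by
  induction s using Finset.cons_induction with
  | empty => simp
  | cons a s ha ih =>
      rw [Finset.prod_cons, ih, monomial_mul, Finset.sum_cons, one_mul]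

lemma phi_monomial {K : Type*} [CommRing K] (D : WOG n m) (u : Fin m → ℕ) :
    D.phi K (MvPolynomial.monomial (Finsupp.equivFunOnFinite.symm u) 1) =
      MvPolynomial.monomial (expVec D u) 1 := by
  rw [WOG.phi, aeval_monomial, map_one, one_mul]
  rw [Finsupp.prod_fintype _ _ (fun i => pow_zero _)]
  have : ∀ e : Fin m,
      (X (D.src e) * X (D.tgt e) ^ D.w (D.tgt e) : MvPolynomial (Fin n) K) ^
          ((Finsupp.equivFunOnFinite.symm u) e) =
        MvPolynomial.monomial
          (u e • (Finsupp.single (D.src e) 1 + Finsupp.single (D.tgt e) (D.w (D.tgt e)))) 1 := by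
    intro e
    rw [X_pow_eq_monomial, X, monomial_mul, one_mul, monomial_pow, one_pow]
    rfl
  simp only [this]
  rw [prod_monomial_one, expVec]

lemma binom_mem_iff {K : Type*} [Field K] (D : WOG n m) (u v : Fin m → ℕ) :
    binomF K u v ∈ D.toricIdeal K ↔ expVec D u = expVec D v := by
  rw [WOG.toricIdeal, RingHom.mem_ker, binomF]
  simp only [AlgHom.toRingHom_eq_coe, RingHom.coe_coe, map_sub]
  rw [phi_monomial, phi_monomial, sub_eq_zero]
  constructor
  · intro h
    exact MvPolynomial.monomial_left_injective (one_ne_zero (α := K)) h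
  · intro h; rw [h]

end Aux

/-- If `f_b ∈ I_D` is a primitive binomial, then the subgraph `D₁` of `D`
whose edges are the edges in `supp(f_b)` (together with the vertices incident to them) is
connected: any two vertices incident to edges of `supp(f_b)` are joined by a walk using only
the (undirected) edges of `supp(f_b)`. -/
theorem support_of_primitive_binomial_connected
    {n m : ℕ} (D : WOG n m) (K : Type*) [Field K]
    (b : Fin m → ℤ)
    (hprim : IsPrimitiveF K (D.toricIdeal K) (vplus b) (vminus b)) :
    ∀ x y : Fin n,
      (∃ e : Fin m, b e ≠ 0 ∧ (D.src e = x ∨ D.tgt e = x)) →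
      (∃ e : Fin m, b e ≠ 0 ∧ (D.src e = y ∨ D.tgt e = y)) →
      (SimpleGraph.fromEdgeSet (D.sym2Edge '' {e : Fin m | b e ≠ 0})).Reachable x y := by
  classical
  intro x y hx hy
  by_contra hreach
  set G := SimpleGraph.fromEdgeSet (D.sym2Edge '' {e : Fin m | b e ≠ 0}) with hG
  have hadj : ∀ e : Fin m, b e ≠ 0 → G.Adj (D.src e) (D.tgt e) := by
    intro e he
    rw [hG, SimpleGraph.fromEdgeSet_adj]
    exact ⟨⟨e, he, rfl⟩, D.no_loops e⟩
  have hreachE : ∀ e : Fin m, b e ≠ 0 → ∀ z, (D.src e = z ∨ D.tgt e = z) →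
      (G.Reachable x z ↔ G.Reachable x (D.src e)) := by
    intro e he z hz
    rcases hz with h | h
    · rw [h]
    · subst h
      exact ⟨fun h' => h'.trans (hadj e he).reachable.symm,
             fun h' => h'.trans (hadj e he).reachable⟩
  set u := vplus b with hu
  set v := vminus b with hv
  set u' : Fin m → ℕ := fun e => if G.Reachable x (D.src e) then u e else 0 with hu'
  set v' : Fin m → ℕ := fun e => if G.Reachable x (D.src e) then v e else 0 with hv'
  have hb0 : ∀ e, b e = 0 → u e = 0 ∧ v e = 0 := by
    intro e he
    simp [hu, hv, vplus, vminus, he]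
  -- incidence coefficient
  set a : Fin m → Fin n → ℕ := fun e z =>
    ((Finsupp.single (D.src e) 1 + Finsupp.single (D.tgt e) (D.w (D.tgt e)) : Fin n →₀ ℕ)) z with ha
  have ha_supp : ∀ e z, a e z ≠ 0 → D.src e = z ∨ D.tgt e = z := by
    intro e z h
    by_contra hc
    push_neg at hc
    simp [ha, Finsupp.single_apply, hc.1, hc.2] at h
  have hexp : ∀ (w : Fin m → ℕ) (z : Fin n), expVec D w z = ∑ e : Fin m, w e * a e z := by
    intro w z
    rw [expVec, Finsupp.finset_sum_apply]
    simp only [ha, Finsupp.smul_apply, smul_eq_mul]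
  have h0 : expVec D u = expVec D v := (binom_mem_iff D u v).mp hprim.2.1
  have key : expVec D u' = expVec D v' := by
    have term : ∀ (w w' : Fin m → ℕ), (∀ e, w' e = if G.Reachable x (D.src e) then w e else 0) →
        (∀ e, b e = 0 → w e = 0) →
        ∀ z e, w' e * a e z = if G.Reachable x z then w e * a e z else 0 := by
      intro w w' hw' hw z e
      by_cases haz : a e z = 0
      · simp [haz]
      by_cases hbe : b e = 0
      · simp [hw' e, hw e hbe]
      · have hiff := hreachE e hbe z (ha_supp e z haz)
        by_cases hz : G.Reachable x z
        · rw [if_pos hz, hw' e, if_pos (hiff.mp hz)]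
        · rw [if_neg hz, hw' e, if_neg (fun h => hz (hiff.mpr h)), zero_mul]
    have hwu : ∀ e, b e = 0 → u e = 0 := fun e he => (hb0 e he).1
    have hwv : ∀ e, b e = 0 → v e = 0 := fun e he => (hb0 e he).2
    ext z
    rw [hexp, hexp]
    rw [Finset.sum_congr rfl (fun e _ => term u u' (fun e => rfl) hwu z e),
        Finset.sum_congr rfl (fun e _ => term v v' (fun e => rfl) hwv z e)]
    by_cases hz : G.Reachable x z
    · simp only [if_pos hz]
      have := DFunLike.congr_fun h0 z
      rw [hexp, hexp] at this
      exact this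
    · simp [if_neg hz]
  obtain ⟨e0, hbe0, hxe0⟩ := hx
  have hce0 : G.Reachable x (D.src e0) := (hreachE e0 hbe0 x hxe0).mp (SimpleGraph.Reachable.refl x)
  have hne : u' ≠ v' := by
    intro h
    have := congrFun h e0
    simp only [hu', hv', if_pos hce0] at this
    simp only [hu, hv, vplus, vminus] at this
    omega
  have hmem : binomF K u' v' ∈ D.toricIdeal K := (binom_mem_iff D u' v').mpr key
  have hle1 : u' ≤ u := by
    intro e; simp only [hu']; split <;> simp
  have hle2 : v' ≤ v := by
    intro e; simp only [hv']; split <;> simp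
  obtain ⟨hequ, heqv⟩ := hprim.2.2 u' v' hne hmem hle1 hle2
  obtain ⟨e1, hbe1, hye1⟩ := hy
  have hnc : ¬ G.Reachable x (D.src e1) := by
    intro h
    exact hreach ((hreachE e1 hbe1 y hye1).mpr h)
  have h1 := congrFun hequ e1
  have h2 := congrFun heqv e1
  simp only [hu', hv', if_neg hnc] at h1 h2
  simp only [hu, hv, vplus, vminus] at h1 h2
  omega
end

section
/- Let D be a weighted oriented graph with no leaves such that no two cycles of D share a common path (i.e., no two cycles have a common edge) and every edge of every cycle of D is incident to a vertex of degree 2, and assume that whenever cycles C₁ and C₂ of D are connected to a cycle C₃ of D by paths P₁ and P₂ respectively, every edge e ∈ E(P₁) ∩ E(P₂) either is incident to a vertex of degree 2, or C₃ shares no vertex with any other cycle in D and is not connected by a path P to any cycle in D with e ∉ E(P). Let f_m ∈ I_D be a primitive binomial and let e_i ∈ supp(f_m^−) be an edge lying on a path connecting two cycles of D such that e_i is not incident to any vertex of degree 2. Then there exist an unbalanced cycle C in D and a subgraph D′ of D with E(D′) = E(D) \ (E(C) ∪ {e_i}) such that C is connected to D′ by the edge e_i. -/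
open MvPolynomial

namespace WOGProof

open SimpleGraph WOG

variable {n m : ℕ}

lemma sym2Edge_inj (D : WOG n m) : Function.Injective D.sym2Edge := by
  intro e e' h
  apply D.no_mult
  rw [WOG.sym2Edge, WOG.sym2Edge, Sym2.eq_iff] at h
  rcases h with ⟨h1, h2⟩ | ⟨h1, h2⟩
  · rw [h1, h2]
  · rw [← h1, ← h2, Finset.pair_comm]

lemma adj_graph (D : WOG n m) (e : Fin m) : D.graph.Adj (D.src e) (D.tgt e) := by
  rw [WOG.graph, SimpleGraph.fromEdgeSet_adj]
  exact ⟨⟨e, rfl⟩, D.no_loops e⟩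

lemma graph_adj_iff {D : WOG n m} {u v : Fin n} :
    D.graph.Adj u v ↔ (∃ e, D.sym2Edge e = s(u, v)) ∧ u ≠ v := by
  rw [WOG.graph, SimpleGraph.fromEdgeSet_adj]; rfl

lemma edge_of_mem_edges {D : WOG n m} {u v : Fin n} {p : D.graph.Walk u v} {x : Sym2 (Fin n)}
    (hx : x ∈ p.edges) : ∃ e, D.sym2Edge e = x := by
  have := p.edges_subset_edgeSet hx
  rw [WOG.graph, SimpleGraph.edgeSet_fromEdgeSet] at this
  exact this.1

/-- The graph with the edge `i` removed. -/
def G0 (D : WOG n m) (i : Fin m) : SimpleGraph (Fin n) :=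
  D.graph \ SimpleGraph.fromEdgeSet {D.sym2Edge i}

lemma G0_le (D : WOG n m) (i : Fin m) : G0 D i ≤ D.graph := sdiff_le

lemma G0_adj_iff {D : WOG n m} {i : Fin m} {u v : Fin n} :
    (G0 D i).Adj u v ↔ D.graph.Adj u v ∧ s(u, v) ≠ D.sym2Edge i := by
  rw [G0, SimpleGraph.sdiff_adj, SimpleGraph.fromEdgeSet_adj]
  constructor
  · rintro ⟨h1, h2⟩
    exact ⟨h1, fun hc => h2 ⟨by simpa using hc, h1.ne⟩⟩
  · rintro ⟨h1, h2⟩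
    exact ⟨h1, fun hc => h2 (by simpa using hc.1)⟩

lemma G0_edge_mem {D : WOG n m} {i : Fin m} {x : Sym2 (Fin n)} :
    x ∈ (G0 D i).edgeSet ↔ x ∈ D.graph.edgeSet ∧ x ≠ D.sym2Edge i := by
  rw [G0, SimpleGraph.edgeSet_sdiff, SimpleGraph.edgeSet_fromEdgeSet]
  constructor
  · rintro ⟨h1, h2⟩
    refine ⟨h1, fun hc => h2 ⟨by simpa using hc, ?_⟩⟩
    subst hc
    exact fun hd => (D.no_loops i) (Sym2.mk_isDiag_iff.mp hd)
  · rintro ⟨h1, h2⟩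
    exact ⟨h1, fun hc => h2 (by simpa using hc.1)⟩

/-- Transfer an `i`-free walk of `D.graph` to `G0`. -/
lemma walk_to_G0 {D : WOG n m} {i : Fin m} {u v : Fin n} (p : D.graph.Walk u v)
    (hfree : D.sym2Edge i ∉ p.edges) :
    ∃ q : (G0 D i).Walk u v, q.edges = p.edges ∧ q.support = p.support := by
  refine ⟨p.transfer (G0 D i) (fun x hx => ?_), p.edges_transfer _, p.support_transfer _⟩
  rw [G0_edge_mem]
  exact ⟨p.edges_subset_edgeSet hx, fun hc => hfree (hc ▸ hx)⟩

/-- The set of `G0`-reachable vertices from `x`. -/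
def reach (D : WOG n m) (i : Fin m) (x : Fin n) : Set (Fin n) :=
  {v | (G0 D i).Reachable x v}

lemma reach_self (D : WOG n m) (i : Fin m) (x : Fin n) : x ∈ reach D i x := Reachable.refl x

lemma reach_adj {D : WOG n m} {i : Fin m} {x u v : Fin n} (hu : u ∈ reach D i x)
    (huv : (G0 D i).Adj u v) : v ∈ reach D i x := hu.trans huv.reachable

lemma reach_walk {D : WOG n m} {i : Fin m} {x u v : Fin n} (hu : u ∈ reach D i x)
    (p : (G0 D i).Walk u v) : v ∈ reach D i x := hu.trans ⟨p⟩

lemma reach_symm_mem {D : WOG n m} {i : Fin m} {x y : Fin n} (h : y ∈ reach D i x) :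
    x ∈ reach D i y := h.symm

end WOGProof
namespace WOGProof

open SimpleGraph WOG

variable {n m : ℕ}

lemma isPath_transfer {V : Type*} {G H : SimpleGraph V} {u v : V} (p : G.Walk u v)
    (hp : ∀ e ∈ p.edges, e ∈ H.edgeSet) (h : p.IsPath) : (p.transfer H hp).IsPath := by
  rw [Walk.isPath_def, Walk.support_transfer]
  exact h.support_nodup

lemma isCycle_transfer {V : Type*} {G H : SimpleGraph V} {v : V} (p : G.Walk v v)
    (hp : ∀ e ∈ p.edges, e ∈ H.edgeSet) (h : p.IsCycle) : (p.transfer H hp).IsCycle := by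
  refine ⟨⟨⟨?_⟩, ?_⟩, ?_⟩
  · rw [Walk.edges_transfer]
    exact h.edges_nodup
  · intro hc
    apply h.ne_nil
    have := p.length_transfer hp
    rw [hc] at this
    simp only [Walk.length_nil] at this
    cases p with
    | nil => rfl
    | cons h q => simp at this
  · rw [Walk.support_transfer]
    exact h.support_nodup

/-- The edge-index set of a list of `Sym2` edges. -/
def cycFinset (D : WOG n m) (l : List (Sym2 (Fin n))) : Finset (Fin m) :=
  Finset.univ.filter (fun e => D.sym2Edge e ∈ l)

lemma mem_cycFinset {D : WOG n m} {l : List (Sym2 (Fin n))} {e : Fin m} :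
    e ∈ cycFinset D l ↔ D.sym2Edge e ∈ l := by
  simp [cycFinset]

lemma isCycleEdges_of_le_walk {D : WOG n m} {G : SimpleGraph (Fin n)} (hle : G ≤ D.graph)
    {v : Fin n} (c : G.Walk v v) (hc : c.IsCycle) :
    D.IsCycleEdges (cycFinset D c.edges) := by
  have hsub : ∀ e ∈ c.edges, e ∈ D.graph.edgeSet := fun e he =>
    SimpleGraph.edgeSet_mono hle (c.edges_subset_edgeSet he)
  refine ⟨v, c.transfer D.graph hsub, isCycle_transfer c hsub hc, ?_⟩
  rw [Walk.edges_transfer]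
  ext x
  simp only [Set.mem_setOf_eq, Set.mem_image, Finset.mem_coe, mem_cycFinset]
  constructor
  · intro hx
    have hx' : x ∈ D.graph.edgeSet := hsub x hx
    rw [WOG.graph, SimpleGraph.edgeSet_fromEdgeSet] at hx'
    obtain ⟨e, he⟩ := hx'.1
    exact ⟨e, he ▸ hx, he⟩
  · rintro ⟨e, he, rfl⟩
    exact he

lemma vertsOf_mem_support {D : WOG n m} {G : SimpleGraph (Fin n)}
    {v : Fin n} (c : G.Walk v v) {x : Fin n}
    (hx : x ∈ D.vertsOf (cycFinset D c.edges)) : x ∈ c.support := by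
  obtain ⟨e, he, hor⟩ := hx
  rw [mem_cycFinset] at he
  rcases hor with h | h
  · subst h
    exact c.fst_mem_support_of_mem_edges he
  · subst h
    exact c.snd_mem_support_of_mem_edges he

section

variable {D : WOG n m} {i : Fin m}

/-- `i` belongs to no cycle. -/
lemma i_not_in_cycle
    (hdeg2 : ∀ e : Fin m, (∃ E : Finset (Fin m), D.IsCycleEdges E ∧ e ∈ E) →
      D.deg (D.src e) = 2 ∨ D.deg (D.tgt e) = 2)
    (hideg : D.deg (D.src i) ≠ 2 ∧ D.deg (D.tgt i) ≠ 2)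
    {E : Finset (Fin m)} (hE : D.IsCycleEdges E) : i ∉ E := by
  intro hi
  rcases hdeg2 i ⟨E, hE, hi⟩ with h | h
  · exact hideg.1 h
  · exact hideg.2 h

/-- The target of `i` is not `G0`-reachable from the source of `i` (i.e. `i` is a bridge). -/
lemma tgt_not_reach_src
    (hdeg2 : ∀ e : Fin m, (∃ E : Finset (Fin m), D.IsCycleEdges E ∧ e ∈ E) →
      D.deg (D.src e) = 2 ∨ D.deg (D.tgt e) = 2)
    (hideg : D.deg (D.src i) ≠ 2 ∧ D.deg (D.tgt i) ≠ 2) :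
    D.tgt i ∉ reach D i (D.src i) := by
  intro hr
  obtain ⟨q⟩ := hr
  set p : (G0 D i).Walk (D.src i) (D.tgt i) := (q.toPath : (G0 D i).Path _ _).val with hpdef
  have hqp : p.IsPath := q.toPath.2
  have hsub : ∀ e ∈ p.edges, e ∈ D.graph.edgeSet := fun e he =>
    SimpleGraph.edgeSet_mono (G0_le D i) (p.edges_subset_edgeSet he)
  set p' : D.graph.Walk (D.src i) (D.tgt i) := p.transfer D.graph hsub with hp'
  have hp'path : p'.IsPath := isPath_transfer p hsub hqp
  have hadj : D.graph.Adj (D.tgt i) (D.src i) := (adj_graph D i).symm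
  have hno : s(D.src i, D.tgt i) ∉ p'.edges := by
    rw [hp', Walk.edges_transfer]
    intro hmem
    have := (G0_edge_mem).mp (p.edges_subset_edgeSet hmem)
    exact this.2 rfl
  have hcyc : (Walk.cons hadj p').IsCycle := by
    rw [Walk.cons_isCycle_iff]
    exact ⟨hp'path, by rwa [Sym2.eq_swap]⟩
  have hE := isCycleEdges_of_le_walk (le_refl D.graph) (Walk.cons hadj p') hcyc
  refine i_not_in_cycle hdeg2 hideg hE ?_
  rw [mem_cycFinset, Walk.edges_cons]
  have hsw : D.sym2Edge i = s(D.tgt i, D.src i) := Sym2.eq_swap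
  rw [hsw]
  exact List.mem_cons_self

end

end WOGProof
namespace WOGProof

open SimpleGraph WOG

variable {n m : ℕ}

/-- The edges incident to `v`. -/
def IncE (D : WOG n m) (v : Fin n) : Finset (Fin m) :=
  Finset.univ.filter (fun e => D.src e = v ∨ D.tgt e = v)

lemma deg_eq_card_IncE (D : WOG n m) (v : Fin n) : D.deg v = (IncE D v).card := by
  rw [WOG.deg, IncE]

lemma mem_IncE {D : WOG n m} {v : Fin n} {e : Fin m} :
    e ∈ IncE D v ↔ D.src e = v ∨ D.tgt e = v := by simp [IncE]

lemma exists_other {D : WOG n m} {v : Fin n} {e : Fin m}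
    (h : D.src e = v ∨ D.tgt e = v) : ∃ z, D.sym2Edge e = s(v, z) ∧ z ≠ v := by
  rcases h with h | h
  · exact ⟨D.tgt e, by rw [WOG.sym2Edge, h], fun hc => D.no_loops e (by rw [h, hc])⟩
  · refine ⟨D.src e, ?_, fun hc => D.no_loops e (by rw [h, hc])⟩
    rw [WOG.sym2Edge, h, Sym2.eq_swap]

lemma incident_of_sym2 {D : WOG n m} {v u : Fin n} {e : Fin m}
    (h : D.sym2Edge e = s(v, u)) : D.src e = v ∨ D.tgt e = v := by
  rw [WOG.sym2Edge, Sym2.eq_iff] at h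
  rcases h with ⟨h1, _⟩ | ⟨_, h2⟩
  · exact Or.inl h1
  · exact Or.inr h2

section

variable {D : WOG n m} {i : Fin m}

lemma G0_adj_of_edge {e : Fin m} {v z : Fin n} (hei : e ≠ i)
    (hs : D.sym2Edge e = s(v, z)) (hz : z ≠ v) : (G0 D i).Adj v z := by
  rw [G0_adj_iff]
  constructor
  · rw [graph_adj_iff]
    exact ⟨⟨e, hs⟩, hz.symm⟩
  · rw [← hs]
    exact fun hc => hei (sym2Edge_inj D hc)

lemma edge_of_G0_adj {v u : Fin n} (h : (G0 D i).Adj v u) :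
    ∃ e, e ≠ i ∧ D.sym2Edge e = s(v, u) := by
  rw [G0_adj_iff] at h
  obtain ⟨⟨e, he⟩, hne⟩ := (graph_adj_iff).mp h.1
  refine ⟨e, fun hc => h.2 ?_, he⟩
  rw [← he, hc]

/-- Every vertex of `G0` with a neighbour has a second neighbour (given the leaf and
degree hypotheses). -/
lemma Hdeg_G0 (hleaf : ∀ x : Fin n, D.deg x ≠ 1)
    (hideg : D.deg (D.src i) ≠ 2 ∧ D.deg (D.tgt i) ≠ 2) :
    ∀ v u : Fin n, (G0 D i).Adj v u → ∃ z, (G0 D i).Adj v z ∧ z ≠ u := by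
  intro v u h
  obtain ⟨f, hfi, hfs⟩ := edge_of_G0_adj h
  have hfinc : f ∈ IncE D v := mem_IncE.mpr (incident_of_sym2 hfs)
  have hcard2 : 2 ≤ ((IncE D v).erase i).card := by
    have h1 : 1 ≤ (IncE D v).card := Finset.card_pos.mpr ⟨f, hfinc⟩
    by_cases hiv : i ∈ IncE D v
    · -- v is an endpoint of i, so its degree is at least 3
      have h3 : 3 ≤ (IncE D v).card := by
        have hne1 : (IncE D v).card ≠ 1 := by rw [← deg_eq_card_IncE]; exact hleaf v
        have hne2 : (IncE D v).card ≠ 2 := by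
          rw [← deg_eq_card_IncE]
          rcases mem_IncE.mp hiv with hh | hh
          · rw [← hh]; exact hideg.1
          · rw [← hh]; exact hideg.2
        omega
      have := Finset.card_erase_of_mem hiv
      omega
    · rw [Finset.erase_eq_of_notMem hiv]
      have hne1 : (IncE D v).card ≠ 1 := by rw [← deg_eq_card_IncE]; exact hleaf v
      omega
  obtain ⟨f', hf', hff'⟩ : ∃ f' ∈ (IncE D v).erase i, f' ≠ f := by
    rcases Finset.exists_mem_ne (s := (IncE D v).erase i) (by omega) f
      with ⟨f', h1, h2⟩
    exact ⟨f', h1, h2⟩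
  have hf'i : f' ≠ i := (Finset.mem_erase.mp hf').1
  have hf'inc := mem_IncE.mp (Finset.mem_erase.mp hf').2
  obtain ⟨z, hz, hzv⟩ := exists_other hf'inc
  refine ⟨z, G0_adj_of_edge hf'i hz hzv, ?_⟩
  intro hzu
  subst hzu
  apply hff'
  apply sym2Edge_inj D
  rw [hz, hfs]

lemma deg_ge3_src (hleaf : ∀ x : Fin n, D.deg x ≠ 1)
    (hideg : D.deg (D.src i) ≠ 2 ∧ D.deg (D.tgt i) ≠ 2) : 3 ≤ D.deg (D.src i) := by
  have h1 : 1 ≤ (IncE D (D.src i)).card :=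
    Finset.card_pos.mpr ⟨i, mem_IncE.mpr (Or.inl rfl)⟩
  have h2 := hleaf (D.src i)
  have h3 := hideg.1
  rw [deg_eq_card_IncE] at h2 h3 ⊢
  omega

lemma deg_ge3_tgt (hleaf : ∀ x : Fin n, D.deg x ≠ 1)
    (hideg : D.deg (D.src i) ≠ 2 ∧ D.deg (D.tgt i) ≠ 2) : 3 ≤ D.deg (D.tgt i) := by
  have h1 : 1 ≤ (IncE D (D.tgt i)).card :=
    Finset.card_pos.mpr ⟨i, mem_IncE.mpr (Or.inr rfl)⟩
  have h2 := hleaf (D.tgt i)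
  have h3 := hideg.2
  rw [deg_eq_card_IncE] at h2 h3 ⊢
  omega

/-- Both endpoints of `i` have two distinct `G0`-neighbours. -/
lemma two_G0_neighbors {v : Fin n}
    (hv : 3 ≤ D.deg v) (hvi : D.src i = v ∨ D.tgt i = v) :
    ∃ u₁ u₂, (G0 D i).Adj v u₁ ∧ (G0 D i).Adj v u₂ ∧ u₁ ≠ u₂ := by
  have hiv : i ∈ IncE D v := mem_IncE.mpr hvi
  have hcard : 2 ≤ ((IncE D v).erase i).card := by
    have := Finset.card_erase_of_mem hiv
    rw [deg_eq_card_IncE] at hv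
    omega
  obtain ⟨f₁, hf₁⟩ := Finset.card_pos.mp (by omega : 0 < ((IncE D v).erase i).card)
  obtain ⟨f₂, hf₂, hne⟩ :=
    Finset.exists_mem_ne (s := (IncE D v).erase i) (by omega) f₁
  obtain ⟨z₁, hz₁, hz₁v⟩ := exists_other (mem_IncE.mp (Finset.mem_erase.mp hf₁).2)
  obtain ⟨z₂, hz₂, hz₂v⟩ := exists_other (mem_IncE.mp (Finset.mem_erase.mp hf₂).2)
  refine ⟨z₁, z₂, G0_adj_of_edge (Finset.mem_erase.mp hf₁).1 hz₁ hz₁v,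
    G0_adj_of_edge (Finset.mem_erase.mp hf₂).1 hz₂ hz₂v, ?_⟩
  intro hc
  apply hne
  apply sym2Edge_inj D
  rw [hz₁, hz₂, hc]

end

end WOGProof
namespace WOGProof

open SimpleGraph

variable {V : Type*}

lemma isPath_concat {G : SimpleGraph V} {u v w : V} {p : G.Walk u v} (hp : p.IsPath)
    (h : G.Adj v w) (hw : w ∉ p.support) : (p.concat h).IsPath := by
  rw [Walk.isPath_def, Walk.support_concat]
  rw [List.nodup_append]
  exact ⟨hp.support_nodup, List.nodup_singleton w, by
    intro x hx y hy hxy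
    rw [List.mem_singleton] at hy
    subst hy
    subst hxy
    exact hw hx⟩

lemma not_mem_support_of_concat_isPath {G : SimpleGraph V} {u v w : V} {p : G.Walk u v}
    {h : G.Adj v w} (hp : (p.concat h).IsPath) : w ∉ p.support := by
  have := hp.support_nodup
  rw [Walk.support_concat, List.nodup_append] at this
  intro hc
  exact this.2.2 w hc w (List.mem_singleton_self w) rfl

/-- The key fuel-walk lemma: starting from a nonempty path and walking without
backtracking in a graph where every non-exceptional vertex has a second neighbour,
we either find a cycle hanging on the path, or reach the exceptional vertex. -/
lemma fuelWalk [Fintype V] [DecidableEq V] {G : SimpleGraph V} (exc : V)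
    (Hdeg : ∀ v u : V, G.Adj v u → v ≠ exc → ∃ z, G.Adj v z ∧ z ≠ u) :
    ∀ (fuel : ℕ) {x₀ u v : V} (p : G.Walk x₀ u) (h : G.Adj u v),
      (p.concat h).IsPath →
      (∀ w ∈ (p.concat h).support, w ≠ exc ∨ w = x₀) →
      Fintype.card V + 1 ≤ fuel + (p.concat h).support.length →
      (∃ (z : V) (c : G.Walk z z) (t : G.Walk x₀ z), c.IsCycle ∧ t.IsPath ∧
        (∀ x ∈ c.support, x ∈ t.support) ∧ (∀ w ∈ t.support, w ≠ exc ∨ w = x₀)) ∨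
      (∃ (v' : V) (p' : G.Walk x₀ v'), p'.IsPath ∧ G.Adj v' exc ∧ exc ∉ p'.support ∧
        v' ≠ x₀) := by
  intro fuel
  induction fuel with
  | zero =>
    intro x₀ u v p h hP hinv hfuel
    exfalso
    have := hP.support_nodup.length_le_card
    omega
  | succ fuel ih =>
    intro x₀ u v p h hP hinv hfuel
    set P := p.concat h with hPdef
    have hvx : v ≠ x₀ := by
      intro hc
      subst hc
      rw [Walk.isPath_iff_eq_nil] at hP
      exact Walk.concat_ne_nil p h hP
    have hvexc : v ≠ exc := by
      rcases hinv v P.end_mem_support with h' | h'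
      · exact h'
      · exact absurd h' hvx
    obtain ⟨z, hvz, hzu⟩ := Hdeg v u h.symm hvexc
    by_cases hzP : z ∈ P.support
    · -- found a cycle
      left
      have hd : (P.dropUntil z hzP).IsPath := hP.dropUntil hzP
      have hnotin : s(v, z) ∉ (P.dropUntil z hzP).edges := by
        intro hc
        have hcP : s(v, z) ∈ P.edges := P.edges_dropUntil_subset hzP hc
        rw [hPdef, Walk.edges_concat, List.concat_eq_append, List.mem_append] at hcP
        rcases hcP with hc' | hc'
        · exact not_mem_support_of_concat_isPath hP (p.fst_mem_support_of_mem_edges hc')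
        · rw [List.mem_singleton, Sym2.eq_iff] at hc'
          rcases hc' with ⟨h1, _⟩ | ⟨_, h2⟩
          · exact h.ne h1.symm
          · exact hzu h2
      refine ⟨v, Walk.cons hvz (P.dropUntil z hzP), P, ?_, hP, ?_, hinv⟩
      · rw [Walk.cons_isCycle_iff]
        exact ⟨hd, hnotin⟩
      · intro x hx
        rw [Walk.support_cons] at hx
        rcases List.mem_cons.mp hx with hx | hx
        · subst hx; exact P.end_mem_support
        · exact P.support_dropUntil_subset hzP hx
    · by_cases hzexc : z = exc
      · -- hit the exceptional vertex
        right
        subst hzexc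
        exact ⟨v, P, hP, hvz, hzP, hvx⟩
      · -- extend the walk
        have hP' : (P.concat hvz).IsPath := isPath_concat hP hvz hzP
        have hinv' : ∀ w ∈ (P.concat hvz).support, w ≠ exc ∨ w = x₀ := by
          intro w hw
          rw [Walk.support_concat, List.mem_append] at hw
          rcases hw with hw | hw
          · exact hinv w hw
          · rw [List.mem_singleton] at hw
            subst hw
            exact Or.inl hzexc
        have hfuel' : Fintype.card V + 1 ≤ fuel + (P.concat hvz).support.length := by
          rw [Walk.support_concat, List.length_append]
          simp only [List.length_singleton]
          omega
        exact ih P hvz hP' hinv' hfuel'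

end WOGProof
namespace WOGProof

open SimpleGraph

variable {V : Type*}

lemma mem_support_reachable {G : SimpleGraph V} [DecidableEq V] {w w' y : V}
    (p : G.Walk w w') (hy : y ∈ p.support) : G.Reachable w y := ⟨p.takeUntil y hy⟩

/-- Two walks from distinct neighbours of `a` to a common endpoint, both avoiding `a`,
yield a cycle through the edge `s(a, u₁)`. -/
lemma twoPaths {G : SimpleGraph V} {a u₁ u₂ y : V}
    (h₁ : G.Adj a u₁) (h₂ : G.Adj a u₂) (hne : u₁ ≠ u₂)
    (t₁ : G.Walk u₁ y) (t₂ : G.Walk u₂ y) (ha₁ : a ∉ t₁.support) (ha₂ : a ∉ t₂.support) :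
    ∃ (u : V) (c : G.Walk u u), c.IsCycle ∧ s(a, u₁) ∈ c.edges := by
  classical
  set W : G.Walk a u₁ := (Walk.cons h₂ t₂).append t₁.reverse with hWdef
  have hW : ∀ e ∈ W.edges, e ∈ (G \ fromEdgeSet {s(a, u₁)}).edgeSet := by
    intro e he
    have heG : e ∈ G.edgeSet := W.edges_subset_edgeSet he
    have hne' : e ≠ s(a, u₁) := by
      rw [hWdef, Walk.edges_append, Walk.edges_cons] at he
      rcases List.mem_append.mp he with he' | he'
      · rcases List.mem_cons.mp he' with he'' | he''
        · subst he''
          intro hc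
          rw [Sym2.eq_iff] at hc
          rcases hc with ⟨_, hc2⟩ | ⟨_, hc2⟩
          · exact hne hc2.symm
          · exact h₂.ne' hc2
        · intro hc
          subst hc
          exact ha₂ (t₂.fst_mem_support_of_mem_edges he'')
      · rw [Walk.edges_reverse, List.mem_reverse] at he'
        intro hc
        subst hc
        exact ha₁ (t₁.fst_mem_support_of_mem_edges he')
    rw [edgeSet_sdiff, Set.mem_diff, edgeSet_fromEdgeSet]
    exact ⟨heG, fun hc => hne' hc.1⟩
  have hreach : (G \ fromEdgeSet {s(a, u₁)}).Reachable a u₁ := ⟨W.transfer _ hW⟩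
  exact (adj_and_reachable_delete_edges_iff_exists_cycle).mp ⟨h₁, hreach⟩

lemma cycle_ne_nil_edges {G : SimpleGraph V} {z : V} {c : G.Walk z z} (hc : c.IsCycle) :
    c.edges ≠ [] := by
  intro h
  apply hc.ne_nil
  cases c with
  | nil => rfl
  | cons h' q => simp [Walk.edges_cons] at h

end WOGProof
namespace WOGProof

open SimpleGraph WOG

variable {n m : ℕ} {D : WOG n m} {i : Fin m}

lemma edge_index_of_mem_edges {G : SimpleGraph (Fin n)} (hle : G ≤ D.graph) {u v : Fin n}
    {p : G.Walk u v} {x : Sym2 (Fin n)} (hx : x ∈ p.edges) :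
    ∃ e, D.sym2Edge e = x ∧ e ∈ cycFinset D p.edges := by
  have hx' : x ∈ D.graph.edgeSet := edgeSet_mono hle (p.edges_subset_edgeSet hx)
  rw [WOG.graph, edgeSet_fromEdgeSet] at hx'
  obtain ⟨e, he⟩ := hx'.1
  exact ⟨e, he, mem_cycFinset.mpr (he ▸ hx)⟩

lemma mem_vertsOf_of_edge {G : SimpleGraph (Fin n)} (hle : G ≤ D.graph) {u v : Fin n}
    {p : G.Walk u v} {x y : Fin n} (hx : s(x, y) ∈ p.edges) :
    x ∈ D.vertsOf (cycFinset D p.edges) := by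
  obtain ⟨e, he, hmem⟩ := edge_index_of_mem_edges hle hx
  exact ⟨e, hmem, incident_of_sym2 he⟩

lemma i_not_mem_cycFinset_G0 {u v : Fin n} {p : (G0 D i).Walk u v} :
    i ∉ cycFinset D p.edges := by
  intro hc
  exact (G0_edge_mem.mp (p.edges_subset_edgeSet (mem_cycFinset.mp hc))).2 rfl

lemma start_mem_vertsOf {G : SimpleGraph (Fin n)} (hle : G ≤ D.graph) {z : Fin n}
    {c : G.Walk z z} (hc : c.IsCycle) : z ∈ D.vertsOf (cycFinset D c.edges) := by
  cases c with
  | nil => exact absurd rfl hc.ne_nil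
  | cons h q =>
      exact mem_vertsOf_of_edge hle (by rw [Walk.edges_cons]; exact List.mem_cons_self)

lemma exists_mem_vertsOf_of_isCycleEdges {E : Finset (Fin m)} (hE : D.IsCycleEdges E) :
    ∃ x, x ∈ D.vertsOf E := by
  obtain ⟨v, c, hc, heq⟩ := hE
  obtain ⟨x, hx⟩ := List.exists_mem_of_ne_nil _ (cycle_ne_nil_edges hc)
  have : x ∈ D.sym2Edge '' (E : Set (Fin m)) := heq ▸ hx
  obtain ⟨e, he, _⟩ := this
  exact ⟨D.src e, e, he, Or.inl rfl⟩

section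

variable (hleaf : ∀ x : Fin n, D.deg x ≠ 1)
    (hideg : D.deg (D.src i) ≠ 2 ∧ D.deg (D.tgt i) ≠ 2)

include hleaf hideg

/-- Walking from a neighbour `u₀` of `x` in `G0`, we either find a cycle through `x`
(all of whose vertices are reachable from `x`), or a cycle avoiding `x` hanging on an
`x`-free path from `u₀`. -/
lemma branch_cycle {x u₀ : Fin n} (hadj : (G0 D i).Adj x u₀) :
    (∃ E : Finset (Fin m), D.IsCycleEdges E ∧ i ∉ E ∧ x ∈ D.vertsOf E ∧
      ∀ y ∈ D.vertsOf E, y ∈ reach D i x) ∨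
    (∃ (z : Fin n) (c : (G0 D i).Walk z z) (t : (G0 D i).Walk u₀ z),
      c.IsCycle ∧ t.IsPath ∧ x ∉ t.support ∧ (∀ q ∈ c.support, q ∈ t.support)) := by
  classical
  have Hdeg : ∀ v u : Fin n, (G0 D i).Adj v u → v ≠ x → ∃ z, (G0 D i).Adj v z ∧ z ≠ u :=
    fun v u h _ => Hdeg_G0 hleaf hideg v u h
  obtain ⟨z₀, hz₀, hz₀x⟩ := Hdeg_G0 hleaf hideg u₀ x hadj.symm
  have hP : ((Walk.nil : (G0 D i).Walk u₀ u₀).concat hz₀).IsPath := by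
    rw [Walk.concat_nil, Walk.cons_isPath_iff]
    refine ⟨Walk.IsPath.nil, ?_⟩
    simp only [Walk.support_nil, List.mem_singleton]
    exact hz₀.ne
  have hinv : ∀ w ∈ ((Walk.nil : (G0 D i).Walk u₀ u₀).concat hz₀).support,
      w ≠ x ∨ w = u₀ := by
    intro w hw
    rw [Walk.concat_nil, Walk.support_cons, Walk.support_nil] at hw
    rcases List.mem_cons.mp hw with hw | hw
    · exact Or.inr hw
    · rw [List.mem_singleton] at hw
      subst hw
      exact Or.inl hz₀x
  have hfuel : Fintype.card (Fin n) + 1 ≤ Fintype.card (Fin n) +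
      ((Walk.nil : (G0 D i).Walk u₀ u₀).concat hz₀).support.length := by
    rw [Walk.concat_nil, Walk.support_cons, Walk.support_nil]
    simp
  rcases fuelWalk x Hdeg (Fintype.card (Fin n)) Walk.nil hz₀ hP hinv hfuel with
    ⟨z, c, t, hc, ht, hsub, hinv'⟩ | ⟨v', p', hp', hv'x, hxfree, hv'u₀⟩
  · right
    refine ⟨z, c, t, hc, ht, ?_, hsub⟩
    intro hx
    rcases hinv' x hx with h' | h'
    · exact h' rfl
    · exact hadj.ne' h'.symm
  · left
    have hconc : (p'.concat hv'x).IsPath := isPath_concat hp' hv'x hxfree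
    have hedge : s(x, u₀) ∉ (p'.concat hv'x).edges := by
      rw [Walk.edges_concat, List.concat_eq_append, List.mem_append]
      rintro (hc | hc)
      · exact hxfree (p'.fst_mem_support_of_mem_edges hc)
      · rw [List.mem_singleton, Sym2.eq_iff] at hc
        rcases hc with ⟨hc1, _⟩ | ⟨_, hc2⟩
        · exact hv'x.ne hc1.symm
        · exact hv'u₀ hc2.symm
    have hcyc : (Walk.cons hadj (p'.concat hv'x)).IsCycle := by
      rw [Walk.cons_isCycle_iff]
      exact ⟨hconc, hedge⟩
    set c : (G0 D i).Walk x x := Walk.cons hadj (p'.concat hv'x) with hcdef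
    refine ⟨cycFinset D c.edges, isCycleEdges_of_le_walk (G0_le D i) c hcyc,
      i_not_mem_cycFinset_G0, ?_, ?_⟩
    · refine mem_vertsOf_of_edge (G0_le D i) (x := x) (y := u₀) ?_
      rw [hcdef, Walk.edges_cons]
      exact List.mem_cons_self
    · intro y hy
      exact mem_support_reachable c (vertsOf_mem_support c hy)

/-- From a vertex `x` (an endpoint of `i`) not on the cycle `C₀`, we can find a cycle
different from `C₀`, avoiding `i`, whose vertices are all `G0`-reachable from `x`. -/
lemma second_cycle {x : Fin n} (hx3 : 3 ≤ D.deg x) (hxi : D.src i = x ∨ D.tgt i = x)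
    {C₀ : Finset (Fin m)} (hxC₀ : x ∉ D.vertsOf C₀) :
    ∃ E : Finset (Fin m), D.IsCycleEdges E ∧ i ∉ E ∧ E ≠ C₀ ∧
      ∀ y ∈ D.vertsOf E, y ∈ reach D i x := by
  classical
  obtain ⟨u₁, u₂, h₁, h₂, hne⟩ := two_G0_neighbors hx3 hxi
  have hthrough : ∀ E : Finset (Fin m), D.IsCycleEdges E → i ∉ E → x ∈ D.vertsOf E →
      (∀ y ∈ D.vertsOf E, y ∈ reach D i x) →
      ∃ E : Finset (Fin m), D.IsCycleEdges E ∧ i ∉ E ∧ E ≠ C₀ ∧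
        ∀ y ∈ D.vertsOf E, y ∈ reach D i x := by
    intro E hE hiE hxE hreach
    refine ⟨E, hE, hiE, ?_, hreach⟩
    intro hc
    subst hc
    exact hxC₀ hxE
  rcases branch_cycle hleaf hideg h₁ with ⟨E, hE, hiE, hxE, hr⟩ |
    ⟨z₁, c₁, t₁, hc₁, ht₁, hxt₁, hsub₁⟩
  · exact hthrough E hE hiE hxE hr
  rcases branch_cycle hleaf hideg h₂ with ⟨E, hE, hiE, hxE, hr⟩ |
    ⟨z₂, c₂, t₂, hc₂, ht₂, hxt₂, hsub₂⟩
  · exact hthrough E hE hiE hxE hr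
  by_cases hDD : cycFinset D c₁.edges = cycFinset D c₂.edges
  · -- the two branch cycles coincide: merge into a cycle through `x`
    have hz₂verts : z₂ ∈ D.vertsOf (cycFinset D c₁.edges) :=
      hDD ▸ start_mem_vertsOf (G0_le D i) hc₂
    have hz₂supp : z₂ ∈ c₁.support := vertsOf_mem_support c₁ hz₂verts
    set conn : (G0 D i).Walk z₁ z₂ := c₁.takeUntil z₂ hz₂supp with hconndef
    set T₁ : (G0 D i).Walk u₁ z₂ := t₁.append conn with hT₁def
    have hxT₁ : x ∉ T₁.support := by
      rw [hT₁def]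
      intro hx
      rcases (Walk.mem_support_append_iff _ _).mp hx with hx | hx
      · exact hxt₁ hx
      · exact hxt₁ (hsub₁ x (c₁.support_takeUntil_subset hz₂supp hx))
    obtain ⟨u, c, hcyc, hedge⟩ := twoPaths h₁ h₂ hne T₁ t₂ hxT₁ hxt₂
    refine hthrough (cycFinset D c.edges) (isCycleEdges_of_le_walk (G0_le D i) c hcyc)
      i_not_mem_cycFinset_G0 (mem_vertsOf_of_edge (G0_le D i) hedge) ?_
    intro y hy
    have hyc : y ∈ c.support := vertsOf_mem_support c hy
    have hxc : x ∈ c.support := c.fst_mem_support_of_mem_edges hedge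
    exact (mem_support_reachable c hxc).symm.trans (mem_support_reachable c hyc)
  · -- two distinct branch cycles: one of them differs from C₀
    have hreach₁ : ∀ y ∈ D.vertsOf (cycFinset D c₁.edges), y ∈ reach D i x := by
      intro y hy
      have : y ∈ t₁.support := hsub₁ y (vertsOf_mem_support c₁ hy)
      exact h₁.reachable.trans (mem_support_reachable t₁ this)
    have hreach₂ : ∀ y ∈ D.vertsOf (cycFinset D c₂.edges), y ∈ reach D i x := by
      intro y hy
      have : y ∈ t₂.support := hsub₂ y (vertsOf_mem_support c₂ hy)
      exact h₂.reachable.trans (mem_support_reachable t₂ this)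
    by_cases hD₁ : cycFinset D c₁.edges = C₀
    · refine ⟨cycFinset D c₂.edges, isCycleEdges_of_le_walk (G0_le D i) c₂ hc₂,
        i_not_mem_cycFinset_G0, ?_, hreach₂⟩
      intro hc
      exact hDD (hD₁.trans hc.symm)
    · exact ⟨cycFinset D c₁.edges, isCycleEdges_of_le_walk (G0_le D i) c₁ hc₁,
        i_not_mem_cycFinset_G0, hD₁, hreach₁⟩

end

end WOGProof
namespace WOGProof

open MvPolynomial WOG

variable {n m : ℕ}

lemma prod_monomial {K σ τ : Type*} [CommSemiring K] [DecidableEq τ] (s : Finset τ)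
    (g : τ → (σ →₀ ℕ)) :
    (∏ e ∈ s, MvPolynomial.monomial (g e) (1 : K)) =
      MvPolynomial.monomial (∑ e ∈ s, g e) 1 := by
  induction s using Finset.cons_induction with
  | empty => simp
  | cons a s ha ih =>
      rw [Finset.prod_cons, Finset.sum_cons, ih, MvPolynomial.monomial_mul, one_mul]

/-- The exponent vector of the image of the edge variable `e`. -/
noncomputable def exF (D : WOG n m) (e : Fin m) : Fin n →₀ ℕ :=
  Finsupp.single (D.src e) 1 + Finsupp.single (D.tgt e) (D.w (D.tgt e))

lemma phi_monomial {K : Type*} [CommSemiring K] (D : WOG n m) (u : Fin m → ℕ) :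
    D.phi K (MvPolynomial.monomial (Finsupp.equivFunOnFinite.symm u) 1) =
      MvPolynomial.monomial (∑ e : Fin m, u e • exF D e) 1 := by
  classical
  rw [WOG.phi, MvPolynomial.aeval_monomial, map_one, one_mul]
  rw [Finsupp.prod_fintype _ _ (fun e => pow_zero _)]
  have hfac : ∀ e : Fin m,
      (X (D.src e) * X (D.tgt e) ^ D.w (D.tgt e) : MvPolynomial (Fin n) K) ^
        (Finsupp.equivFunOnFinite.symm u e) =
      MvPolynomial.monomial (u e • exF D e) 1 := by
    intro e
    have h1 : (X (D.src e) * X (D.tgt e) ^ D.w (D.tgt e) : MvPolynomial (Fin n) K) =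
        MvPolynomial.monomial (exF D e) 1 := by
      rw [X_pow_eq_monomial, X, monomial_mul, one_mul, exF]
    rw [h1, MvPolynomial.monomial_pow, one_pow]
    congr 1
  rw [Finset.prod_congr rfl (fun e _ => hfac e), prod_monomial]

lemma exF_apply (D : WOG n m) (e : Fin m) (j : Fin n) :
    exF D e j = (if D.src e = j then 1 else 0) + (if D.tgt e = j then D.w (D.tgt e) else 0) := by
  rw [exF, Finsupp.add_apply, Finsupp.single_apply, Finsupp.single_apply]

lemma incMatrix_eq (D : WOG n m) (j : Fin n) (e : Fin m) :
    D.incMatrix j e =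
      (if D.src e = j then 1 else 0) + (if D.tgt e = j then (D.w j : ℚ) else 0) := by
  rw [WOG.incMatrix]
  by_cases h1 : D.src e = j
  · have h2 : ¬ D.tgt e = j := fun hc => D.no_loops e (h1.trans hc.symm)
    simp [h1, h2]
  · by_cases h2 : D.tgt e = j
    · simp [h1, h2]
    · simp [h1, h2]

/-- The crucial linear relation: a binomial in the kernel of `φ` gives a `ℚ`-linear
relation on the columns of the incidence matrix. -/
lemma linear_relation {K : Type*} [Field K] (D : WOG n m) (b : Fin m → ℤ)
    (hmem : binomF K (vplus b) (vminus b) ∈ D.toricIdeal K) :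
    ∀ j : Fin n, ∑ e : Fin m, (b e : ℚ) * D.incMatrix j e = 0 := by
  classical
  have hker : (D.phi K) (binomF K (vplus b) (vminus b)) = 0 := hmem
  rw [binomF, map_sub, sub_eq_zero, phi_monomial, phi_monomial] at hker
  rw [MvPolynomial.monomial_eq_monomial_iff] at hker
  have hsum : (∑ e : Fin m, vplus b e • exF D e) = ∑ e : Fin m, vminus b e • exF D e := by
    rcases hker with ⟨h, _⟩ | ⟨h, _⟩
    · exact h
    · exact absurd h one_ne_zero
  intro j
  have happ : (∑ e : Fin m, vplus b e * exF D e j) = ∑ e : Fin m, vminus b e * exF D e j := by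
    have := congrArg (fun f : Fin n →₀ ℕ => f j) hsum
    simpa [Finsupp.finset_sum_apply, Finsupp.smul_apply] using this
  have hQ : (∑ e : Fin m, (vplus b e : ℚ) * exF D e j) =
      ∑ e : Fin m, (vminus b e : ℚ) * exF D e j := by
    have := congrArg (fun k : ℕ => (k : ℚ)) happ
    push_cast at this
    exact this
  have hcol : ∀ e : Fin m, ((exF D e j : ℕ) : ℚ) = D.incMatrix j e := by
    intro e
    rw [exF_apply, incMatrix_eq]
    push_cast
    congr 1
    by_cases h2 : D.tgt e = j
    · rw [if_pos h2, if_pos h2, h2]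
    · rw [if_neg h2, if_neg h2]
  have hb : ∀ e : Fin m, ((vplus b e : ℚ) - (vminus b e : ℚ)) = (b e : ℚ) := by
    intro e
    have := Int.toNat_sub_toNat_neg (b e)
    have h2 := congrArg (fun z : ℤ => (z : ℚ)) this
    push_cast at h2
    rw [vplus, vminus]
    exact_mod_cast h2
  calc ∑ e : Fin m, (b e : ℚ) * D.incMatrix j e
      = ∑ e : Fin m, ((vplus b e : ℚ) - vminus b e) * D.incMatrix j e := by
        refine Finset.sum_congr rfl fun e _ => ?_
        rw [hb e]
    _ = (∑ e : Fin m, (vplus b e : ℚ) * D.incMatrix j e) -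
        ∑ e : Fin m, (vminus b e : ℚ) * D.incMatrix j e := by
        rw [← Finset.sum_sub_distrib]
        refine Finset.sum_congr rfl fun e _ => ?_
        ring
    _ = 0 := by
        rw [sub_eq_zero]
        calc (∑ e : Fin m, (vplus b e : ℚ) * D.incMatrix j e)
            = ∑ e : Fin m, (vplus b e : ℚ) * exF D e j := by
              refine Finset.sum_congr rfl fun e _ => ?_
              rw [hcol e]
          _ = ∑ e : Fin m, (vminus b e : ℚ) * exF D e j := hQ
          _ = ∑ e : Fin m, (vminus b e : ℚ) * D.incMatrix j e := by
              refine Finset.sum_congr rfl fun e _ => ?_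
              rw [hcol e]

end WOGProof
namespace WOGProof

open SimpleGraph WOG

variable {n m : ℕ} {D : WOG n m} {i : Fin m}

lemma incMatrix_eq_zero (D : WOG n m) {j : Fin n} {e : Fin m}
    (h : ¬ (D.src e = j ∨ D.tgt e = j)) : D.incMatrix j e = 0 := by
  push_neg at h
  rw [WOG.incMatrix]
  simp [h.1, h.2]

lemma incMatrix_ne_zero (D : WOG n m) {j : Fin n} {e : Fin m}
    (h : D.src e = j ∨ D.tgt e = j) : D.incMatrix j e ≠ 0 := by
  rw [WOG.incMatrix]
  rcases h with h | h
  · simp [h]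
  · by_cases h1 : D.src e = j
    · simp [h1]
    · simp only [Matrix.of_apply, h1, if_false, h, if_true]
      have := D.w_pos j
      positivity

lemma incident_of_incMatrix_ne_zero (D : WOG n m) {j : Fin n} {e : Fin m}
    (h : D.incMatrix j e ≠ 0) : D.src e = j ∨ D.tgt e = j := by
  by_contra hc
  exact h (incMatrix_eq_zero D hc)

/-- The kernel lemma: a vector supported on one side of the bridge whose incidence-image
is a nonzero multiple of `δ_x` yields an unbalanced cycle on that side. -/
lemma kernel_cycle (x : Fin n) (κ : ℚ) (hκ : κ ≠ 0) (c₀ : Fin m → ℚ)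
    (hsupp₀ : ∀ e, c₀ e ≠ 0 → e ≠ i ∧ D.src e ∈ reach D i x ∧ D.tgt e ∈ reach D i x)
    (hlin₀ : ∀ j ∈ reach D i x,
      ∑ e : Fin m, c₀ e * D.incMatrix j e = (if j = x then κ else 0)) :
    ∃ E : Finset (Fin m), D.IsCycleEdges E ∧ ¬ D.BalancedOn E ∧
      (∀ e ∈ E, e ≠ i ∧ D.src e ∈ reach D i x ∧ D.tgt e ∈ reach D i x) := by
  classical
  set Q : Fin m → Prop := fun e => e ≠ i ∧ D.src e ∈ reach D i x ∧ D.tgt e ∈ reach D i x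
    with hQdef
  set T : (Fin m → ℚ) → Prop := fun c => (∀ e, c e ≠ 0 → Q e) ∧
    (∀ j ∈ reach D i x, ∑ e : Fin m, c e * D.incMatrix j e = (if j = x then κ else 0))
    with hTdef
  set suppF : (Fin m → ℚ) → Finset (Fin m) := fun c => Finset.univ.filter (fun e => c e ≠ 0)
    with hsuppFdef
  have hP : ∃ k, ∃ c, T c ∧ (suppF c).card = k := ⟨_, c₀, ⟨hsupp₀, hlin₀⟩, rfl⟩
  obtain ⟨c, hcT, hccard⟩ := Nat.find_spec hP
  have hmin : ∀ c', T c' → Nat.find hP ≤ (suppF c').card := by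
    intro c' hc'
    exact Nat.find_min' hP ⟨c', hc', rfl⟩
  set F : Finset (Fin m) := suppF c with hFdef
  have hmemF : ∀ e, e ∈ F ↔ c e ≠ 0 := by
    intro e
    simp [hFdef, hsuppFdef]
  -- fact f2: at any vertex other than x, edges of F do not occur alone
  have f2 : ∀ v : Fin n, v ≠ x → ∀ e₀ ∈ F, (D.src e₀ = v ∨ D.tgt e₀ = v) →
      ∃ e₁ ∈ F, e₁ ≠ e₀ ∧ (D.src e₁ = v ∨ D.tgt e₁ = v) := by
    intro v hvx e₀ he₀ hinc
    have hvreach : v ∈ reach D i x := by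
      rcases hinc with h | h
      · exact h ▸ (hcT.1 e₀ ((hmemF e₀).mp he₀)).2.1
      · exact h ▸ (hcT.1 e₀ ((hmemF e₀).mp he₀)).2.2
    by_contra hno
    push_neg at hno
    have hsum := hcT.2 v hvreach
    rw [if_neg hvx] at hsum
    have hsingle : ∑ e : Fin m, c e * D.incMatrix v e = c e₀ * D.incMatrix v e₀ := by
      refine Finset.sum_eq_single e₀ (fun e _ hne => ?_) (fun h => absurd (Finset.mem_univ e₀) h)
      by_cases hce : c e = 0
      · rw [hce, zero_mul]
      · have heF : e ∈ F := (hmemF e).mpr hce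
        by_cases hei : D.src e = v ∨ D.tgt e = v
        · rcases hei with h' | h'
          · exact absurd h' (hno e heF hne).1
          · exact absurd h' (hno e heF hne).2
        · rw [incMatrix_eq_zero D hei, mul_zero]
    rw [hsingle] at hsum
    rcases mul_eq_zero.mp hsum with hc0 | hM0
    · exact (hmemF e₀).mp he₀ hc0
    · exact incMatrix_ne_zero D hinc hM0
  -- fact f1: some edge of F is incident to x
  have f1 : ∃ e ∈ F, (D.src e = x ∨ D.tgt e = x) := by
    have hsum := hcT.2 x (reach_self D i x)
    rw [if_pos rfl] at hsum
    by_contra hno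
    push_neg at hno
    apply hκ
    rw [← hsum]
    refine Finset.sum_eq_zero fun e _ => ?_
    by_cases hce : c e = 0
    · rw [hce, zero_mul]
    · have h' := hno e ((hmemF e).mpr hce)
      rw [incMatrix_eq_zero D (by push_neg; exact h'), mul_zero]
  -- the subgraph on F
  set GF : SimpleGraph (Fin n) := SimpleGraph.fromEdgeSet (D.sym2Edge '' (F : Set (Fin m)))
    with hGFdef
  have hle : GF ≤ D.graph := by
    rw [hGFdef, WOG.graph]
    apply SimpleGraph.fromEdgeSet_mono
    rintro y ⟨e, _, rfl⟩
    exact ⟨e, rfl⟩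
  have hGFadj : ∀ u v : Fin n, GF.Adj u v ↔ (∃ e ∈ F, D.sym2Edge e = s(u, v)) ∧ u ≠ v := by
    intro u v
    rw [hGFdef, SimpleGraph.fromEdgeSet_adj]
    constructor
    · rintro ⟨⟨e, he, hs⟩, hne⟩
      exact ⟨⟨e, he, hs⟩, hne⟩
    · rintro ⟨⟨e, he, hs⟩, hne⟩
      exact ⟨⟨e, he, hs⟩, hne⟩
  have Hdeg : ∀ v u : Fin n, GF.Adj v u → v ≠ x → ∃ z, GF.Adj v z ∧ z ≠ u := by
    intro v u hadj hvx
    obtain ⟨⟨e₀, he₀, hs₀⟩, hne⟩ := (hGFadj v u).mp hadj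
    obtain ⟨e₁, he₁, he₁e₀, hinc₁⟩ := f2 v hvx e₀ he₀ (incident_of_sym2 hs₀)
    obtain ⟨z, hz, hzv⟩ := exists_other hinc₁
    refine ⟨z, (hGFadj v z).mpr ⟨⟨e₁, he₁, hz⟩, hzv.symm⟩, ?_⟩
    intro hzu
    subst hzu
    exact he₁e₀ (sym2Edge_inj D (hz.trans hs₀.symm))
  obtain ⟨ex, hexF, hexinc⟩ := f1
  obtain ⟨u₀, hu₀, hu₀x⟩ := exists_other hexinc
  have hadj₀ : GF.Adj x u₀ := (hGFadj x u₀).mpr ⟨⟨ex, hexF, hu₀⟩, hu₀x.symm⟩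
  have hP0 : ((Walk.nil : GF.Walk x x).concat hadj₀).IsPath := by
    rw [Walk.concat_nil, Walk.cons_isPath_iff]
    refine ⟨Walk.IsPath.nil, ?_⟩
    simp only [Walk.support_nil, List.mem_singleton]
    exact hadj₀.ne
  have hinv : ∀ w ∈ ((Walk.nil : GF.Walk x x).concat hadj₀).support, w ≠ x ∨ w = x := by
    intro w _
    by_cases h : w = x
    · exact Or.inr h
    · exact Or.inl h
  have hfuel : Fintype.card (Fin n) + 1 ≤ Fintype.card (Fin n) +
      ((Walk.nil : GF.Walk x x).concat hadj₀).support.length := by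
    rw [Walk.concat_nil, Walk.support_cons, Walk.support_nil]
    simp
  rcases fuelWalk x Hdeg (Fintype.card (Fin n)) Walk.nil hadj₀ hP0 hinv hfuel with
    ⟨z, cw, t, hcyc, _, _, _⟩ | ⟨v', p', _, _, hxfree, _⟩
  swap
  · exact absurd p'.start_mem_support hxfree
  -- we have found a cycle `cw` in `GF`
  set E : Finset (Fin m) := cycFinset D cw.edges with hEdef
  have hEF : E ⊆ F := by
    intro e he
    have hmem : D.sym2Edge e ∈ GF.edgeSet := cw.edges_subset_edgeSet (mem_cycFinset.mp he)
    rw [hGFdef, SimpleGraph.edgeSet_fromEdgeSet] at hmem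
    obtain ⟨f, hfF, hfe⟩ := hmem.1
    rwa [← sym2Edge_inj D hfe]
  have hEcyc : D.IsCycleEdges E := isCycleEdges_of_le_walk hle cw hcyc
  refine ⟨E, hEcyc, ?_, fun e he => hcT.1 e ((hmemF e).mp (hEF he))⟩
  -- unbalancedness via minimality
  intro hbal
  rw [WOG.BalancedOn] at hbal
  obtain ⟨g, hg, e₂, hge₂⟩ := Fintype.not_linearIndependent_iff.mp hbal
  set d : Fin m → ℚ := fun e => if h : e ∈ E then g ⟨e, h⟩ else 0 with hddef
  have hd_col : ∀ j : Fin n, ∑ e : Fin m, d e * D.incMatrix j e = 0 := by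
    intro j
    have h1 := congrFun hg j
    simp only [Finset.sum_apply, Pi.smul_apply, Matrix.transpose_apply, smul_eq_mul,
      Pi.zero_apply] at h1
    have h2 : ∑ e : Fin m, d e * D.incMatrix j e = ∑ e ∈ E, d e * D.incMatrix j e := by
      refine (Finset.sum_subset (Finset.subset_univ E) (fun e _ hne => ?_)).symm
      rw [hddef]
      simp only [dif_neg hne, zero_mul]
    rw [h2, ← Finset.sum_attach E (fun e => d e * D.incMatrix j e), ← h1]
    refine Finset.sum_congr rfl fun e _ => ?_
    rw [hddef]
    simp only [dif_pos e.2]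
  have hde₂ : d e₂.1 = g e₂ := by
    rw [hddef]
    simp only [dif_pos e₂.2]
  set tq : ℚ := c e₂.1 / d e₂.1 with htqdef
  set c' : Fin m → ℚ := fun e => c e - tq * d e with hc'def
  have hc'T : T c' := by
    constructor
    · intro e he
      rw [hc'def] at he
      by_cases hce : c e = 0
      · have hde : d e ≠ 0 := by
          intro hc0
          apply he
          simp [hce, hc0]
        have heE : e ∈ E := by
          by_contra hc0
          apply hde
          rw [hddef]
          simp [hc0]
        exact hcT.1 e ((hmemF e).mp (hEF heE))
      · exact hcT.1 e hce
    · intro j hj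
      have := hcT.2 j hj
      rw [hc'def]
      simp only
      rw [← this]
      have hexp : ∀ e : Fin m, (c e - tq * d e) * D.incMatrix j e =
          c e * D.incMatrix j e - tq * (d e * D.incMatrix j e) := by
        intro e; ring
      rw [Finset.sum_congr rfl (fun e _ => hexp e), Finset.sum_sub_distrib,
        ← Finset.mul_sum, hd_col j, mul_zero, sub_zero]
  have hsub : suppF c' ⊆ F.erase e₂.1 := by
    intro e he
    rw [hsuppFdef] at he
    simp only [Finset.mem_filter, Finset.mem_univ, true_and] at he
    rw [Finset.mem_erase]
    constructor
    · intro hc0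
      apply he
      subst hc0
      have hdne : d e₂.1 ≠ 0 := by rw [hde₂]; exact hge₂
      show c e₂.1 - tq * d e₂.1 = 0
      rw [htqdef, div_mul_cancel₀ _ hdne, sub_self]
    · rw [hc'def] at he
      by_cases hce : c e = 0
      · have hde : d e ≠ 0 := by
          intro hc0
          apply he
          simp [hce, hc0]
        have heE : e ∈ E := by
          by_contra hc0
          apply hde
          rw [hddef]
          simp [hc0]
        exact hEF heE
      · exact (hmemF e).mpr hce
  have he₂F : e₂.1 ∈ F := hEF e₂.2
  have hlt : (suppF c').card < Nat.find hP := by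
    calc (suppF c').card ≤ (F.erase e₂.1).card := Finset.card_le_card hsub
      _ < F.card := Finset.card_erase_lt_of_mem he₂F
      _ = Nat.find hP := hccard
  exact absurd (hmin c' hc'T) (by omega)

end WOGProof
namespace WOGProof

open SimpleGraph WOG

variable {n m : ℕ} {D : WOG n m} {i : Fin m}

lemma cross_reach {x : Fin n} {e : Fin m} (hei : e ≠ i) :
    (D.src e ∈ reach D i x ↔ D.tgt e ∈ reach D i x) := by
  have hadj : (G0 D i).Adj (D.src e) (D.tgt e) := by
    rw [G0_adj_iff]
    refine ⟨adj_graph D e, ?_⟩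
    intro hc
    exact hei (sym2Edge_inj D hc)
  exact ⟨fun h => reach_adj h hadj, fun h => reach_adj h hadj.symm⟩

lemma side_unbalanced (b : Fin m → ℤ)
    (hAb : ∀ j : Fin n, ∑ e : Fin m, (b e : ℚ) * D.incMatrix j e = 0)
    (hbi : (b i : ℚ) ≠ 0) (x : Fin n) (μ : ℚ) (hμ : μ ≠ 0)
    (hcol : ∀ j ∈ reach D i x, D.incMatrix j i = if j = x then μ else 0) :
    ∃ E : Finset (Fin m), D.IsCycleEdges E ∧ ¬ D.BalancedOn E ∧
      (∀ e ∈ E, e ≠ i ∧ D.src e ∈ reach D i x ∧ D.tgt e ∈ reach D i x) := by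
  classical
  set c₀ : Fin m → ℚ := fun e => if (e ≠ i ∧ D.src e ∈ reach D i x) then (b e : ℚ) else 0
    with hc₀def
  have hsupp₀ : ∀ e, c₀ e ≠ 0 → e ≠ i ∧ D.src e ∈ reach D i x ∧ D.tgt e ∈ reach D i x := by
    intro e he
    rw [hc₀def] at he
    simp only at he
    by_cases hcond : e ≠ i ∧ D.src e ∈ reach D i x
    · exact ⟨hcond.1, hcond.2, (cross_reach hcond.1).mp hcond.2⟩
    · rw [if_neg hcond] at he
      exact absurd rfl he
  refine kernel_cycle x (-(b i : ℚ) * μ) (by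
      intro hc
      rcases mul_eq_zero.mp hc with hc | hc
      · exact hbi (neg_eq_zero.mp hc)
      · exact hμ hc) c₀ hsupp₀ ?_
  intro j hj
  have hterm : ∀ e : Fin m, c₀ e * D.incMatrix j e =
      (b e : ℚ) * D.incMatrix j e - (if e = i then (b i : ℚ) * D.incMatrix j i else 0) := by
    intro e
    by_cases hei : e = i
    · subst hei
      rw [if_pos rfl, hc₀def]
      simp only [ne_eq, not_true_eq_false, false_and, if_false]
      ring
    · rw [if_neg hei, sub_zero, hc₀def]
      simp only
      by_cases hcond : e ≠ i ∧ D.src e ∈ reach D i x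
      · rw [if_pos hcond]
      · rw [if_neg hcond]
        have hsrc : D.src e ∉ reach D i x := by
          intro hc
          exact hcond ⟨hei, hc⟩
        have htgt : D.tgt e ∉ reach D i x := fun hc => hsrc ((cross_reach hei).mpr hc)
        have hM : D.incMatrix j e = 0 := by
          apply incMatrix_eq_zero
          rintro (h | h)
          · exact hsrc (h ▸ hj)
          · exact htgt (h ▸ hj)
        rw [hM, mul_zero, mul_zero]
  rw [Finset.sum_congr rfl (fun e _ => hterm e), Finset.sum_sub_distrib, hAb j, zero_sub,
    Finset.sum_ite_eq' Finset.univ i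
      (fun _ => (b i : ℚ) * D.incMatrix j i), if_pos (Finset.mem_univ i), hcol j hj]
  by_cases hjx : j = x
  · rw [if_pos hjx, if_pos hjx]
    ring
  · rw [if_neg hjx, if_neg hjx, mul_zero, neg_zero]

section

variable (hdeg2 : ∀ e : Fin m, (∃ E : Finset (Fin m), D.IsCycleEdges E ∧ e ∈ E) →
      D.deg (D.src e) = 2 ∨ D.deg (D.tgt e) = 2)
    (hideg : D.deg (D.src i) ≠ 2 ∧ D.deg (D.tgt i) ≠ 2)

include hdeg2 hideg

lemma src_not_reach_tgt : D.src i ∉ reach D i (D.tgt i) := by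
  intro hr
  exact tgt_not_reach_src hdeg2 hideg (reach_symm_mem hr)

/-- The `a`-side of the bridge contains an unbalanced cycle. -/
lemma unbalanced_src (b : Fin m → ℤ)
    (hAb : ∀ j : Fin n, ∑ e : Fin m, (b e : ℚ) * D.incMatrix j e = 0)
    (hbi : (b i : ℚ) ≠ 0) :
    ∃ E : Finset (Fin m), D.IsCycleEdges E ∧ ¬ D.BalancedOn E ∧
      (∀ e ∈ E, e ≠ i ∧ D.src e ∈ reach D i (D.src i) ∧ D.tgt e ∈ reach D i (D.src i)) := by
  refine side_unbalanced b hAb hbi (D.src i) 1 one_ne_zero ?_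
  intro j hj
  rw [incMatrix_eq]
  by_cases hja : j = D.src i
  · rw [if_pos hja, if_pos hja.symm]
    have : ¬ D.tgt i = j := by
      intro hc
      exact tgt_not_reach_src hdeg2 hideg (hc ▸ hj)
    rw [if_neg this, add_zero]
  · rw [if_neg hja, if_neg (fun hc : D.src i = j => hja hc.symm)]
    have : ¬ D.tgt i = j := by
      intro hc
      exact tgt_not_reach_src hdeg2 hideg (hc ▸ hj)
    rw [if_neg this, add_zero]

/-- The `b`-side of the bridge contains an unbalanced cycle. -/
lemma unbalanced_tgt (b : Fin m → ℤ)
    (hAb : ∀ j : Fin n, ∑ e : Fin m, (b e : ℚ) * D.incMatrix j e = 0)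
    (hbi : (b i : ℚ) ≠ 0) :
    ∃ E : Finset (Fin m), D.IsCycleEdges E ∧ ¬ D.BalancedOn E ∧
      (∀ e ∈ E, e ≠ i ∧ D.src e ∈ reach D i (D.tgt i) ∧ D.tgt e ∈ reach D i (D.tgt i)) := by
  refine side_unbalanced b hAb hbi (D.tgt i) (D.w (D.tgt i)) ?_ ?_
  · have := D.w_pos (D.tgt i)
    positivity
  intro j hj
  rw [incMatrix_eq]
  have hsrc : ¬ D.src i = j := by
    intro hc
    exact src_not_reach_tgt hdeg2 hideg (hc ▸ hj)
  by_cases hjb : j = D.tgt i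
  · rw [if_pos hjb, if_neg hsrc, if_pos hjb.symm, zero_add, hjb]
  · rw [if_neg hjb, if_neg hsrc, if_neg (fun hc : D.tgt i = j => hjb hc.symm), zero_add]

end

end WOGProof
namespace WOGProof

open SimpleGraph WOG

variable {n m : ℕ} {D : WOG n m} {i : Fin m}

lemma lift_walk {u v : Fin n} (q : (G0 D i).Walk u v) :
    ∃ p : D.graph.Walk u v, p.edges = q.edges :=
  ⟨q.transfer D.graph (fun e he => SimpleGraph.edgeSet_mono (G0_le D i)
    (q.edges_subset_edgeSet he)), q.edges_transfer _⟩

/-- Two vertices on the same side of the bridge are joined by an `i`-free path. -/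
lemma same_side_path {x u v : Fin n} (hu : u ∈ reach D i x) (hv : v ∈ reach D i x) :
    ∃ p : D.graph.Walk u v, p.IsPath ∧ D.sym2Edge i ∉ p.edges := by
  obtain ⟨w₁⟩ := hu
  obtain ⟨w₂⟩ := hv
  obtain ⟨q', hq'⟩ := lift_walk (w₁.reverse.append w₂)
  refine ⟨q'.toPath, q'.toPath.2, ?_⟩
  intro hc
  have hc' : D.sym2Edge i ∈ q'.edges := q'.edges_toPath_subset hc
  rw [hq'] at hc'
  have := (w₁.reverse.append w₂).edges_subset_edgeSet hc'
  exact (G0_edge_mem.mp this).2 rfl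

section

variable (hdeg2 : ∀ e : Fin m, (∃ E : Finset (Fin m), D.IsCycleEdges E ∧ e ∈ E) →
      D.deg (D.src e) = 2 ∨ D.deg (D.tgt e) = 2)
    (hideg : D.deg (D.src i) ≠ 2 ∧ D.deg (D.tgt i) ≠ 2)

include hdeg2 hideg

lemma reach_disjoint {y : Fin n} (h1 : y ∈ reach D i (D.src i))
    (h2 : y ∈ reach D i (D.tgt i)) : False :=
  tgt_not_reach_src hdeg2 hideg (h1.trans h2.symm)

/-- Vertices on opposite sides of the bridge are joined by a path through `i`. -/
lemma cross_path {u v : Fin n} (hu : u ∈ reach D i (D.src i))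
    (hv : v ∈ reach D i (D.tgt i)) :
    ∃ p : D.graph.Walk u v, p.IsPath ∧ D.sym2Edge i ∈ p.edges := by
  obtain ⟨w₁⟩ := hu
  obtain ⟨w₂⟩ := hv
  obtain ⟨q₁, hq₁⟩ := lift_walk w₁
  obtain ⟨q₂, hq₂⟩ := lift_walk w₂
  set W : D.graph.Walk u v :=
    q₁.reverse.append ((Walk.cons (adj_graph D i) Walk.nil).append q₂) with hWdef
  refine ⟨W.toPath, W.toPath.2, ?_⟩
  by_contra hfree
  obtain ⟨q0, hq0e, _⟩ := walk_to_G0 (W.toPath : D.graph.Walk u v) hfree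
  have : v ∈ reach D i (D.src i) := reach_walk (reach_walk (reach_self D i _) w₁) q0
  exact reach_disjoint hdeg2 hideg this (reach_walk (reach_self D i _) w₂)

end

end WOGProof
/-- Let `D` be a weighted oriented graph with no leaves in which no two
(distinct) cycles share a common edge and every edge of every cycle is incident to a vertex
of degree `2`, satisfying the path condition of Theorem 3.8: whenever (pairwise distinct)
cycles `C₁`, `C₂` are connected to a cycle `C₃` by paths `P₁`, `P₂`, every edge
`e ∈ E(P₁) ∩ E(P₂)` either meets a vertex of degree `2`, or `C₃` shares no vertex with any
other cycle of `D` and every path from `C₃` to another cycle of `D` contains `e`.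
Let `f_b ∈ I_D` be a primitive binomial and let `e_i ∈ supp(f_b⁻)` be an edge lying on a
path connecting two cycles of `D` and not incident to any vertex of degree `2`. Then there
are an unbalanced cycle `C` of `D` and a subgraph `D'` with `E(D') = E(D) \ (E(C) ∪ {e_i})`
such that `C` is connected to `D'` by the edge `e_i`. -/
theorem exists_unbalanced_cycle_attached_by_edge
    {n m : ℕ} (D : WOG n m) (K : Type*) [Field K]
    (hleaf : ∀ x : Fin n, D.deg x ≠ 1)
    (hnc : ∀ E₁ E₂ : Finset (Fin m), D.IsCycleEdges E₁ → D.IsCycleEdges E₂ →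
      (E₁ ∩ E₂).Nonempty → E₁ = E₂)
    (hdeg2 : ∀ e : Fin m, (∃ E : Finset (Fin m), D.IsCycleEdges E ∧ e ∈ E) →
      D.deg (D.src e) = 2 ∨ D.deg (D.tgt e) = 2)
    (hpaths : ∀ E₁ E₂ E₃ : Finset (Fin m),
      D.IsCycleEdges E₁ → D.IsCycleEdges E₂ → D.IsCycleEdges E₃ →
      E₁ ≠ E₂ → E₁ ≠ E₃ → E₂ ≠ E₃ →
      ∀ (x₁ y₁ x₂ y₂ : Fin n) (p₁ : D.graph.Walk x₁ y₁) (p₂ : D.graph.Walk x₂ y₂),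
        p₁.IsPath → p₂.IsPath →
        x₁ ∈ D.vertsOf E₁ → y₁ ∈ D.vertsOf E₃ →
        x₂ ∈ D.vertsOf E₂ → y₂ ∈ D.vertsOf E₃ →
        ∀ e : Fin m, D.sym2Edge e ∈ p₁.edges → D.sym2Edge e ∈ p₂.edges →
          ((D.deg (D.src e) = 2 ∨ D.deg (D.tgt e) = 2) ∨
           ((∀ E' : Finset (Fin m), D.IsCycleEdges E' → E' ≠ E₃ →
               D.vertsOf E' ∩ D.vertsOf E₃ = ∅) ∧
            (∀ E' : Finset (Fin m), D.IsCycleEdges E' → E' ≠ E₃ →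
              ∀ (x y : Fin n) (p : D.graph.Walk x y), p.IsPath →
                x ∈ D.vertsOf E₃ → y ∈ D.vertsOf E' → D.sym2Edge e ∈ p.edges))))
    (b : Fin m → ℤ)
    (hprim : IsPrimitiveF K (D.toricIdeal K) (vplus b) (vminus b))
    (i : Fin m) (hineg : b i < 0)
    (hipath : ∃ E₁ E₂ : Finset (Fin m), D.IsCycleEdges E₁ ∧ D.IsCycleEdges E₂ ∧ E₁ ≠ E₂ ∧
      ∃ (x y : Fin n) (p : D.graph.Walk x y), p.IsPath ∧
        x ∈ D.vertsOf E₁ ∧ y ∈ D.vertsOf E₂ ∧ D.sym2Edge i ∈ p.edges)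
    (hideg : D.deg (D.src i) ≠ 2 ∧ D.deg (D.tgt i) ≠ 2) :
    ∃ EC : Finset (Fin m), D.IsCycleEdges EC ∧ ¬ D.BalancedOn EC ∧ i ∉ EC ∧
      ((D.src i ∈ D.vertsOf EC ∧
          D.tgt i ∈ D.vertsOf (Finset.univ \ (EC ∪ {i}))) ∨
       (D.tgt i ∈ D.vertsOf EC ∧
          D.src i ∈ D.vertsOf (Finset.univ \ (EC ∪ {i})))) := by
  classical
  obtain ⟨-, hmem, -⟩ := hprim
  have hAb := WOGProof.linear_relation D b hmem
  have hbiQ : (b i : ℚ) ≠ 0 := Int.cast_ne_zero.mpr (ne_of_lt hineg)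
  obtain ⟨CA, hCAcyc, hCAunb, hCAprop⟩ := WOGProof.unbalanced_src hdeg2 hideg b hAb hbiQ
  obtain ⟨CB, hCBcyc, hCBunb, hCBprop⟩ := WOGProof.unbalanced_tgt hdeg2 hideg b hAb hbiQ
  have hiCA : i ∉ CA := fun hc => (hCAprop i hc).1 rfl
  have hiCB : i ∉ CB := fun hc => (hCBprop i hc).1 rfl
  have hvertsCA : ∀ y ∈ D.vertsOf CA, y ∈ WOGProof.reach D i (D.src i) := by
    rintro y ⟨e, he, (h | h)⟩
    · exact h ▸ (hCAprop e he).2.1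
    · exact h ▸ (hCAprop e he).2.2
  have hvertsCB : ∀ y ∈ D.vertsOf CB, y ∈ WOGProof.reach D i (D.tgt i) := by
    rintro y ⟨e, he, (h | h)⟩
    · exact h ▸ (hCBprop e he).2.1
    · exact h ▸ (hCBprop e he).2.2
  by_cases hA : D.src i ∈ D.vertsOf CA
  · -- the unbalanced source-side cycle passes through `src i`
    refine ⟨CA, hCAcyc, hCAunb, hiCA, Or.inl ⟨hA, ?_⟩⟩
    have h3 := WOGProof.deg_ge3_tgt hleaf hideg
    have hcard : 0 < ((WOGProof.IncE D (D.tgt i)).erase i).card := by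
      have h4 := Finset.card_erase_of_mem
        (WOGProof.mem_IncE.mpr (Or.inr rfl) : i ∈ WOGProof.IncE D (D.tgt i))
      rw [WOGProof.deg_eq_card_IncE] at h3
      omega
    obtain ⟨e', he'⟩ := Finset.card_pos.mp hcard
    have he'i : e' ≠ i := (Finset.mem_erase.mp he').1
    have he'inc := WOGProof.mem_IncE.mp (Finset.mem_erase.mp he').2
    have he'CA : e' ∉ CA := by
      intro hc
      have h5 := (hCAprop e' hc).2
      rcases he'inc with h | h
      · exact WOGProof.tgt_not_reach_src hdeg2 hideg (h ▸ h5.1)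
      · exact WOGProof.tgt_not_reach_src hdeg2 hideg (h ▸ h5.2)
    refine ⟨e', ?_, he'inc⟩
    rw [Finset.mem_sdiff]
    refine ⟨Finset.mem_univ _, ?_⟩
    rw [Finset.mem_union]
    rintro (hc | hc)
    · exact he'CA hc
    · exact he'i (Finset.mem_singleton.mp hc)
  by_cases hB : D.tgt i ∈ D.vertsOf CB
  · -- the unbalanced target-side cycle passes through `tgt i`
    refine ⟨CB, hCBcyc, hCBunb, hiCB, Or.inr ⟨hB, ?_⟩⟩
    have h3 := WOGProof.deg_ge3_src hleaf hideg
    have hcard : 0 < ((WOGProof.IncE D (D.src i)).erase i).card := by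
      have h4 := Finset.card_erase_of_mem
        (WOGProof.mem_IncE.mpr (Or.inl rfl) : i ∈ WOGProof.IncE D (D.src i))
      rw [WOGProof.deg_eq_card_IncE] at h3
      omega
    obtain ⟨e', he'⟩ := Finset.card_pos.mp hcard
    have he'i : e' ≠ i := (Finset.mem_erase.mp he').1
    have he'inc := WOGProof.mem_IncE.mp (Finset.mem_erase.mp he').2
    have he'CB : e' ∉ CB := by
      intro hc
      have h5 := (hCBprop e' hc).2
      rcases he'inc with h | h
      · exact WOGProof.src_not_reach_tgt hdeg2 hideg (h ▸ h5.1)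
      · exact WOGProof.src_not_reach_tgt hdeg2 hideg (h ▸ h5.2)
    refine ⟨e', ?_, he'inc⟩
    rw [Finset.mem_sdiff]
    refine ⟨Finset.mem_univ _, ?_⟩
    rw [Finset.mem_union]
    rintro (hc | hc)
    · exact he'CB hc
    · exact he'i (Finset.mem_singleton.mp hc)
  -- both unbalanced cycles avoid the endpoints of `i`: contradiction via `hpaths`
  exfalso
  obtain ⟨A₂, hA₂cyc, hiA₂, hA₂ne, hA₂reach⟩ := WOGProof.second_cycle hleaf hideg
    (WOGProof.deg_ge3_src hleaf hideg) (Or.inl rfl) hA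
  obtain ⟨KB, hKBcyc, hiKB, hKBne, hKBreach⟩ := WOGProof.second_cycle hleaf hideg
    (WOGProof.deg_ge3_tgt hleaf hideg) (Or.inr rfl) hB
  obtain ⟨x₁, hx₁⟩ := WOGProof.exists_mem_vertsOf_of_isCycleEdges hCAcyc
  obtain ⟨x₂, hx₂⟩ := WOGProof.exists_mem_vertsOf_of_isCycleEdges hA₂cyc
  obtain ⟨y₀, hy₀⟩ := WOGProof.exists_mem_vertsOf_of_isCycleEdges hCBcyc
  obtain ⟨y', hy'⟩ := WOGProof.exists_mem_vertsOf_of_isCycleEdges hKBcyc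
  have hx₁r := hvertsCA x₁ hx₁
  have hx₂r := hA₂reach x₂ hx₂
  have hy₀r := hvertsCB y₀ hy₀
  have hy'r := hKBreach y' hy'
  obtain ⟨P₁, hP₁p, hP₁i⟩ := WOGProof.cross_path hdeg2 hideg hx₁r hy₀r
  obtain ⟨P₂, hP₂p, hP₂i⟩ := WOGProof.cross_path hdeg2 hideg hx₂r hy₀r
  have hCACB : CA ≠ CB := fun hc =>
    WOGProof.reach_disjoint hdeg2 hideg hx₁r (hvertsCB x₁ (hc ▸ hx₁))
  have hA₂CB : A₂ ≠ CB := fun hc =>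
    WOGProof.reach_disjoint hdeg2 hideg hx₂r (hvertsCB x₂ (hc ▸ hx₂))
  rcases hpaths CA A₂ CB hCAcyc hA₂cyc hCBcyc (Ne.symm hA₂ne) hCACB hA₂CB
      x₁ y₀ x₂ y₀ P₁ P₂ hP₁p hP₂p hx₁ hy₀ hx₂ hy₀ i hP₁i hP₂i with hdeg | ⟨hdisj, hthrough⟩
  · rcases hdeg with h | h
    · exact hideg.1 h
    · exact hideg.2 h
  · obtain ⟨p, hp, hpfree⟩ := WOGProof.same_side_path hy₀r hy'r
    exact hpfree (hthrough KB hKBcyc hKBne y₀ y' p hp hy₀ hy')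
end
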